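/- arXiv:2406.06115 — 3 statements merged into one kernel-verified Lean document; each statement's English description precedes it below -/
import Mathlib

section
/- Write each monomial cᵢⱼ y₀^i y₁^j of a nonzero polynomial P ∈ ℂ[y₀,y₁] (with y₁ the Euler-type variable of weight 1, i.e., the term corresponds to the point (−j, i+j) in the plane) and form the Newton polygon 𝒩(P) as the convex hull of these points plus the right half-lines. If s(x) = c₀ x^{μ₀} + (higher terms) ∈ Ω with c₀ ≠ 0 solves the autonomous first-order equation P(y, y') = 0 and y₁ actually appears in P, then μ₀ = 0 or μ₀ is the co-slope of a side of 𝒩(P); in particular μ₀ ∈ ℚ. -/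
open Classical Filter

noncomputable section

/-- Support of a coefficient function (set of exponents with nonzero coefficient). -/
def suppG (f : ℝ → ℂ) : Set ℝ := Function.support f

/-- Membership in the field `Ω` of generalized power series: finitely many
exponents with nonzero coefficient below any bound (exponents tend to `∞`). -/
def OmegaSupp (f : ℝ → ℂ) : Prop := ∀ B : ℝ, {a : ℝ | f a ≠ 0 ∧ a ≤ B}.Finite

/-- The series `1 = x^0`. -/
def oneG : ℝ → ℂ := fun a => if a = 0 then 1 else 0

/-- Multiplication (convolution) of generalized power series. -/
def mulG (f g : ℝ → ℂ) : ℝ → ℂ := fun a => ∑ᶠ b : ℝ, f b * g (a - b)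

/-- Powers of a generalized power series. -/
def powG (f : ℝ → ℂ) : ℕ → (ℝ → ℂ)
  | 0 => oneG
  | (k+1) => mulG f (powG f k)

/-- The monomial `c x^ν`. -/
def monomialG (c : ℂ) (ν : ℝ) : ℝ → ℂ := fun a => if a = ν then c else 0

/-- Generic first-order operator on generalized power series, sending
`x^μ ↦ dd(μ) x^(μ-ε)`.  The ordinary derivative is `dd = id, ε = 1`, the Euler
derivative is `dd = id, ε = 0`, and the `q`-difference operator is
`dd = q^·, ε = 0`. -/
def Dop (dd : ℝ → ℂ) (ε : ℝ) (f : ℝ → ℂ) : ℝ → ℂ := fun a => dd (a + ε) * f (a + ε)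

/-- `q^μ` for real `μ`, via a (principal) branch of `log q`. -/
def qpow (q : ℂ) (μ : ℝ) : ℂ := Complex.exp (μ * Complex.log q)

/-- The operator is one of: ordinary derivative, Euler derivative, or a
`q`-difference operator with `|q| ≠ 1`. -/
def IsAdmissibleOp (dd : ℝ → ℂ) (ε : ℝ) : Prop :=
  ((ε = 1 ∨ ε = 0) ∧ ∀ μ : ℝ, dd μ = (μ : ℂ)) ∨
  (ε = 0 ∧ ∃ q : ℂ, q ≠ 0 ∧ ‖q‖ ≠ 1 ∧ ∀ μ : ℝ, dd μ = qpow q μ)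

/-- A polynomial in `y₀, …, y_n` with generalized power series coefficients,
recorded by its coefficient at each multi-exponent `ρ`. -/
abbrev PolyG (n : ℕ) := (Fin (n+1) →₀ ℕ) → (ℝ → ℂ)

/-- The union of the supports of the coefficients of `P`. -/
def suppP {n : ℕ} (P : PolyG n) : Set ℝ := ⋃ ρ, Function.support (P ρ)

/-- `∏ κ (v κ)^(ρ κ)` as a generalized power series. -/
def prodPow {n : ℕ} (v : Fin (n+1) → (ℝ → ℂ)) (ρ : Fin (n+1) →₀ ℕ) : ℝ → ℂ :=
  (List.ofFn (fun κ : Fin (n+1) => powG (v κ) (ρ κ))).foldr mulG oneG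

/-- Evaluation `P(v₀, …, v_n)` of a polynomial at generalized power series. -/
def evalP {n : ℕ} (P : PolyG n) (v : Fin (n+1) → (ℝ → ℂ)) : ℝ → ℂ :=
  fun a => ∑ᶠ ρ : Fin (n+1) →₀ ℕ, mulG (P ρ) (prodPow v ρ) a

/-- Product of binomial coefficients `∏ κ C((ρ+σ) κ, ρ κ)`. -/
def binomProd {n : ℕ} (ρ σ : Fin (n+1) →₀ ℕ) : ℂ :=
  ∏ κ : Fin (n+1), (Nat.choose ((ρ + σ) κ) (ρ κ) : ℂ)

/-- Full substitution `P[v] = P(v₀ + y₀, …, v_n + y_n)`. -/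
def fullSub {n : ℕ} (P : PolyG n) (v : Fin (n+1) → (ℝ → ℂ)) : PolyG n :=
  fun ρ a => ∑ᶠ σ : Fin (n+1) →₀ ℕ, binomProd ρ σ * mulG (P (ρ + σ)) (prodPow v σ) a

/-- Full substitution of the monomial `c x^ν` and its iterated images under
the operator: `P[c x^ν]`. -/
def subMon {n : ℕ} (dd : ℝ → ℂ) (ε : ℝ) (P : PolyG n) (c : ℂ) (ν : ℝ) : PolyG n :=
  fullSub P (fun κ => (Dop dd ε)^[(κ : ℕ)] (monomialG c ν))

/-- The sequence `P₀ = P`, `P_{i+1} = P_i[c_i x^{ν_i}]`. -/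
def seqSub {n : ℕ} (dd : ℝ → ℂ) (ε : ℝ) (P : PolyG n) (c : ℕ → ℂ) (ν : ℕ → ℝ) :
    ℕ → PolyG n
  | 0 => P
  | (i+1) => subMon dd ε (seqSub dd ε P c ν i) (c i) (ν i)

/-- `|ρ| = ρ₀ + ⋯ + ρ_n`. -/
def totDeg {n : ℕ} (ρ : Fin (n+1) →₀ ℕ) : ℕ := ∑ κ : Fin (n+1), ρ κ

/-- `ω(ρ) = ρ₁ + 2ρ₂ + ⋯ + nρ_n`. -/
def wt {n : ℕ} (ρ : Fin (n+1) →₀ ℕ) : ℕ := ∑ κ : Fin (n+1), (κ : ℕ) * ρ κ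

/-- The cloud of points of `P`: `(α, r)` such that some coefficient
`P_{(α,ρ)}` (of `x^{α+εω(ρ)} y^ρ` with `|ρ| = r`) is nonzero. -/
def cloud {n : ℕ} (ε : ℝ) (P : PolyG n) : Set (ℝ × ℕ) :=
  {p | ∃ ρ : Fin (n+1) →₀ ℕ, totDeg ρ = p.2 ∧ P ρ (p.1 + ε * wt ρ) ≠ 0}

/-- The value `α₀` of the supporting line `μ r + α = α₀` of co-slope `μ`. -/
def lineMin {n : ℕ} (ε : ℝ) (μ : ℝ) (P : PolyG n) : ℝ :=
  sInf ((fun p : ℝ × ℕ => p.1 + μ * p.2) '' cloud ε P)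

/-- The cloud points lying on the element `E_μ(P)` of co-slope `μ`. -/
def Eelem {n : ℕ} (ε : ℝ) (μ : ℝ) (P : PolyG n) : Set (ℝ × ℕ) :=
  {p | p ∈ cloud ε P ∧ p.1 + μ * p.2 = lineMin ε μ P}

/-- Height of `Top(E_μ(P))`. -/
def topHeight {n : ℕ} (ε : ℝ) (μ : ℝ) (P : PolyG n) : ℕ := sSup (Prod.snd '' Eelem ε μ P)

/-- Height of `Bot(E_μ(P))`. -/
def botHeight {n : ℕ} (ε : ℝ) (μ : ℝ) (P : PolyG n) : ℕ := sInf (Prod.snd '' Eelem ε μ P)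

/-- The Newton polygon of `P`: the convex envelope of the cloud points
translated by the right half-line. -/
def NPoly {n : ℕ} (ε : ℝ) (P : PolyG n) : Set (ℝ × ℝ) :=
  convexHull ℝ {x : ℝ × ℝ | ∃ p ∈ cloud ε P, ∃ t : ℝ, 0 ≤ t ∧ x = (p.1 + t, (p.2 : ℝ))}

/-- `⟦μ⟧^(κ)`: the falling factorial `μ(μ-1)⋯(μ-κ+1)` in the ordinary case,
`μ^κ` in the Euler case, `q^{κμ}` in the `q`-difference case. -/
def dmuk (dd : ℝ → ℂ) (ε : ℝ) (μ : ℝ) (κ : ℕ) : ℂ :=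
  ∏ i ∈ Finset.range κ, dd (μ - ε * i)

/-- The indicial polynomial `Ψ_{(P;V)}` of `P` at the point `V`, evaluated at
(the value associated with) `μ`. -/
def psiAt {n : ℕ} (dd : ℝ → ℂ) (ε : ℝ) (P : PolyG n) (V : ℝ × ℕ) (μ : ℝ) : ℂ :=
  ∑ᶠ ρ : Fin (n+1) →₀ ℕ,
    if totDeg ρ = V.2 then
      P ρ (V.1 + ε * wt ρ) * ∏ κ : Fin (n+1), (dmuk dd ε μ (κ : ℕ)) ^ (ρ κ)
    else 0

/-- The characteristic polynomial `Φ_{(P;μ)}` of `P` with respect to the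
co-slope `μ`, evaluated at `C`. -/
def phiAt {n : ℕ} (dd : ℝ → ℂ) (ε : ℝ) (P : PolyG n) (μ : ℝ) (C : ℂ) : ℂ :=
  ∑ᶠ h : ℕ, psiAt dd ε P (lineMin ε μ P - μ * h, h) μ * C ^ h

/-- The admissibility (necessary initial conditions) of the generalized
polynomial `c₀ x^{ν₀} + ⋯ + c_k x^{ν_k}` for `P = 0`. -/
def AdmissibleUpTo {n : ℕ} (dd : ℝ → ℂ) (ε : ℝ) (P : PolyG n) (c : ℕ → ℂ) (ν : ℕ → ℝ)
    (k : ℕ) : Prop :=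
  ∀ i ≤ k, phiAt dd ε (seqSub dd ε P c ν i) (ν i) (c i) = 0

/-- The generalized polynomial `c₀ x^{ν₀} + ⋯ + c_k x^{ν_k}` as a series. -/
def rSer (c : ℕ → ℂ) (ν : ℕ → ℝ) (k : ℕ) : ℝ → ℂ :=
  fun a => ∑ i ∈ Finset.range (k+1), if a = ν i then c i else 0

/-- The series `Σ_{i=0}^∞ c_i x^{ν_i}`. -/
def sSerInf (c : ℕ → ℂ) (ν : ℕ → ℝ) : ℝ → ℂ :=
  fun a => ∑ᶠ i : ℕ, if ν i = a then c i else 0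

/-- Partial derivative `∂P/∂y_κ`. -/
def pderivP {n : ℕ} (κ : Fin (n+1)) (P : PolyG n) : PolyG n :=
  fun ρ a => ((ρ κ + 1 : ℕ) : ℂ) * P (ρ + Finsupp.single κ 1) a

/-- Order of a series (`⊤` for the zero series). -/
def ordG (f : ℝ → ℂ) : WithTop ℝ := if f = 0 then ⊤ else (sInf (Function.support f) : ℝ)

/-- `dim_ℚ ⟨A ∪ B⟩_ℚ / ⟨B⟩_ℚ` as a cardinal. -/
def rankQuot (A B : Set ℝ) : Cardinal :=
  Module.rank ℚ
    (↥(Submodule.span ℚ (A ∪ B)) ⧸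
      Submodule.comap (Submodule.span ℚ (A ∪ B)).subtype (Submodule.span ℚ B))

end

namespace Stmt13Aux

/-- `f` vanishes below `ν` and takes value `k` at `ν`. -/
def Lead (f : ℝ → ℂ) (ν : ℝ) (k : ℂ) : Prop :=
  (∀ a, a < ν → f a = 0) ∧ f ν = k

lemma lead_congr {f ν k ν' k'} (h : Lead f ν k) (hν : ν = ν') (hk : k = k') :
    Lead f ν' k' := hν ▸ hk ▸ h

lemma lead_one : Lead oneG 0 1 := by
  constructor
  · intro a ha; simp [oneG, ne_of_lt ha]
  · simp [oneG]

lemma lead_monomial (k : ℂ) (ν : ℝ) : Lead (monomialG k ν) ν k := by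
  constructor
  · intro a ha; simp [monomialG, ne_of_lt ha]
  · simp [monomialG]

lemma lead_mul {f g : ℝ → ℂ} {νf νg : ℝ} {kf kg : ℂ}
    (hf : Lead f νf kf) (hg : Lead g νg kg) :
    Lead (mulG f g) (νf + νg) (kf * kg) := by
  constructor
  · intro a ha
    have : ∀ b : ℝ, f b * g (a - b) = 0 := by
      intro b
      rcases lt_or_ge b νf with hb | hb
      · rw [hf.1 b hb, zero_mul]
      · rw [hg.1 (a - b) (by linarith), mul_zero]
    simp only [mulG]
    exact finsum_eq_zero_of_forall_eq_zero this
  · show (∑ᶠ b : ℝ, f b * g (νf + νg - b)) = kf * kg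
    rw [finsum_eq_single _ νf]
    · rw [show νf + νg - νf = νg by ring, hf.2, hg.2]
    · intro b hb
      rcases lt_or_ge b νf with h | h
      · rw [hf.1 b h, zero_mul]
      · have : νf + νg - b < νg := by
          rcases lt_or_eq_of_le h with h' | h'
          · linarith
          · exact absurd h'.symm hb
        rw [hg.1 _ this, mul_zero]

lemma lead_pow {f : ℝ → ℂ} {ν : ℝ} {k : ℂ} (hf : Lead f ν k) (n : ℕ) :
    Lead (powG f n) ((n : ℝ) * ν) (k ^ n) := by
  induction n with
  | zero => exact lead_congr lead_one (by simp) (by simp)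
  | succ m ih =>
      exact lead_congr (lead_mul hf ih) (by push_cast; ring) (by ring)

lemma mulG_zero_left {g : ℝ → ℂ} {ν : ℝ} (a : ℝ) : mulG (monomialG 0 ν) g a = 0 := by
  simp only [mulG]
  apply finsum_eq_zero_of_forall_eq_zero
  intro b
  simp [monomialG]

end Stmt13Aux

/-- the leading exponent of a solution of a nontrivial autonomous
first order ODE is `0` or the co-slope of a side of the Newton polygon; in
particular it is rational. -/
theorem stmt13 (c : (Fin 2 →₀ ℕ) → ℂ) (hcfin : (Function.support c).Finite)
    (hnontriv : ∃ ρ : Fin 2 →₀ ℕ, ρ 1 ≠ 0 ∧ c ρ ≠ 0)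
    (s : ℝ → ℂ) (hs : OmegaSupp s) (μ₀ : ℝ)
    (hlead : s μ₀ ≠ 0) (hmin : ∀ a, a < μ₀ → s a = 0)
    (hsol : evalP (n := 1) (fun ρ => monomialG (c ρ) 0)
      (fun κ : Fin 2 => (Dop (fun a => (a : ℂ)) 1)^[(κ : ℕ)] s) = 0) :
    ((μ₀ = 0 ∨
      ∃ p q : ℝ × ℕ,
        p ∈ {x : ℝ × ℕ | ∃ ρ : Fin 2 →₀ ℕ, c ρ ≠ 0 ∧
              x = (-((ρ 1 : ℕ) : ℝ), ρ 0 + ρ 1)} ∧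
        q ∈ {x : ℝ × ℕ | ∃ ρ : Fin 2 →₀ ℕ, c ρ ≠ 0 ∧
              x = (-((ρ 1 : ℕ) : ℝ), ρ 0 + ρ 1)} ∧
        p ≠ q ∧ p.1 + μ₀ * p.2 = q.1 + μ₀ * q.2 ∧
        (∀ r ∈ {x : ℝ × ℕ | ∃ ρ : Fin 2 →₀ ℕ, c ρ ≠ 0 ∧
              x = (-((ρ 1 : ℕ) : ℝ), ρ 0 + ρ 1)},
          p.1 + μ₀ * p.2 ≤ r.1 + μ₀ * r.2)) ∧
      ∃ qq : ℚ, μ₀ = (qq : ℝ)) := by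
    classical
  by_cases hμ : μ₀ = 0
  · exact ⟨Or.inl hμ, ⟨0, by simp [hμ]⟩⟩
  -- setup
  open Stmt13Aux in
  set dd : ℝ → ℂ := fun a => (a : ℂ) with hdd
  set v : Fin 2 → (ℝ → ℂ) := fun κ : Fin 2 => (Dop dd 1)^[(κ : ℕ)] s with hv
  set c₀ : ℂ := s μ₀ with hc₀
  have hleadS : Stmt13Aux.Lead s μ₀ c₀ := ⟨hmin, rfl⟩
  have hleadS' : Stmt13Aux.Lead (Dop dd 1 s) (μ₀ - 1) ((μ₀ : ℂ) * c₀) := by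
    constructor
    · intro a ha
      simp only [Dop]
      rw [hmin (a + 1) (by linarith), mul_zero]
    · simp only [Dop, hdd]
      norm_num
      exact Or.inl rfl
  -- leading behaviour of each monomial term
  set e : (Fin 2 →₀ ℕ) → ℝ := fun ρ => (ρ 0 : ℝ) * μ₀ + (ρ 1 : ℝ) * (μ₀ - 1) with he
  set K : (Fin 2 →₀ ℕ) → ℂ := fun ρ => c₀ ^ (ρ 0) * ((μ₀ : ℂ) * c₀) ^ (ρ 1) with hK
  have hprodEq : ∀ ρ : Fin 2 →₀ ℕ,
      prodPow v ρ = mulG (powG s (ρ 0)) (mulG (powG (Dop dd 1 s) (ρ 1)) oneG) := by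
    intro ρ
    have h0 : v 0 = s := by simp [hv]
    have h1 : v 1 = Dop dd 1 s := by simp [hv]
    simp [prodPow, List.ofFn_succ, h0, h1]
  have hprod : ∀ ρ : Fin 2 →₀ ℕ, Stmt13Aux.Lead (prodPow v ρ) (e ρ) (K ρ) := by
    intro ρ
    rw [hprodEq ρ]
    exact Stmt13Aux.lead_congr
      (Stmt13Aux.lead_mul (Stmt13Aux.lead_pow hleadS (ρ 0))
        (Stmt13Aux.lead_mul (Stmt13Aux.lead_pow hleadS' (ρ 1)) Stmt13Aux.lead_one))
      (by simp [he]) (by simp [hK])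
  set T : (Fin 2 →₀ ℕ) → (ℝ → ℂ) := fun ρ => mulG (monomialG (c ρ) 0) (prodPow v ρ) with hT
  have hTlead : ∀ ρ : Fin 2 →₀ ℕ, Stmt13Aux.Lead (T ρ) (e ρ) (c ρ * K ρ) := by
    intro ρ
    exact Stmt13Aux.lead_congr
      (Stmt13Aux.lead_mul (Stmt13Aux.lead_monomial (c ρ) 0) (hprod ρ)) (by ring) rfl
  -- the minimizing exponent
  obtain ⟨ρx, hρx1, hρxc⟩ := hnontriv
  have hne : hcfin.toFinset.Nonempty := ⟨ρx, by simp [Set.Finite.mem_toFinset, Function.mem_support, hρxc]⟩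
  obtain ⟨ρm, hρm, hρmmin⟩ := hcfin.toFinset.exists_min_image e hne
  set m : ℝ := e ρm with hm
  have hρmc : c ρm ≠ 0 := by simpa [Set.Finite.mem_toFinset] using hρm
  -- evaluate the solution equation at the exponent m
  have hsum : (∑ ρ ∈ hcfin.toFinset, T ρ m) = 0 := by
    have h1 : evalP (n := 1) (fun ρ => monomialG (c ρ) 0) v m = 0 := by
      rw [hsol]; rfl
    have h2 : evalP (n := 1) (fun ρ => monomialG (c ρ) 0) v m
        = ∑ᶠ ρ : Fin 2 →₀ ℕ, T ρ m := rfl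
    rw [← h1, h2]
    refine (finsum_eq_finset_sum_of_support_subset _ ?_).symm
    intro ρ hρ
    simp only [Function.mem_support] at hρ
    rw [Finset.mem_coe, Set.Finite.mem_toFinset, Function.mem_support]
    intro hc0
    apply hρ
    simp only [hT]
    rw [hc0]
    exact Stmt13Aux.mulG_zero_left m
  -- only minimizing terms survive
  have hTval : ∀ ρ ∈ hcfin.toFinset, T ρ m = if e ρ = m then c ρ * K ρ else 0 := by
    intro ρ hρ
    by_cases hem : e ρ = m
    · rw [if_pos hem, ← hem]; exact (hTlead ρ).2
    · rw [if_neg hem]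
      have hlt : m < e ρ := lt_of_le_of_ne (hρmmin ρ hρ) (fun h => hem h.symm)
      exact (hTlead ρ).1 m hlt
  set M : Finset (Fin 2 →₀ ℕ) := hcfin.toFinset.filter (fun ρ => e ρ = m) with hM
  have hsum2 : (∑ ρ ∈ M, c ρ * K ρ) = 0 := by
    rw [← hsum, Finset.sum_congr rfl hTval, Finset.sum_filter]
  have hKne : ∀ ρ : Fin 2 →₀ ℕ, K ρ ≠ 0 := by
    intro ρ
    have hc₀ne : c₀ ≠ 0 := hlead
    have hμne : (μ₀ : ℂ) ≠ 0 := by exact_mod_cast Complex.ofReal_ne_zero.mpr hμ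
    exact mul_ne_zero (pow_ne_zero _ hc₀ne) (pow_ne_zero _ (mul_ne_zero hμne hc₀ne))
  have hρmM : ρm ∈ M := by simp [hM, hρm, hm]
  -- there must be a second minimizing monomial
  have hexists2 : ∃ ρ' ∈ M, ρ' ≠ ρm := by
    by_contra h
    push_neg at h
    have : M = {ρm} := by
      apply Finset.eq_singleton_iff_unique_mem.mpr
      exact ⟨hρmM, h⟩
    rw [this, Finset.sum_singleton] at hsum2
    have hρmc' : c ρm * K ρm ≠ 0 := mul_ne_zero hρmc (hKne ρm)
    exact hρmc' hsum2
  obtain ⟨ρ', hρ'M, hρ'ne⟩ := hexists2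
  have hρ'c : c ρ' ≠ 0 := by
    have := (Finset.mem_filter.mp hρ'M).1
    simpa [Set.Finite.mem_toFinset] using this
  have hρ'e : e ρ' = m := (Finset.mem_filter.mp hρ'M).2
  -- build the two cloud points
  set p : ℝ × ℕ := (-((ρm 1 : ℕ) : ℝ), ρm 0 + ρm 1) with hp
  set q : ℝ × ℕ := (-((ρ' 1 : ℕ) : ℝ), ρ' 0 + ρ' 1) with hq
  have hval : ∀ ρ : Fin 2 →₀ ℕ,
      (-((ρ 1 : ℕ) : ℝ)) + μ₀ * ((ρ 0 + ρ 1 : ℕ) : ℝ) = e ρ := by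
    intro ρ; simp only [he]; push_cast; ring
  have hpval : p.1 + μ₀ * (p.2 : ℝ) = m := by
    rw [hp]; exact hval ρm
  have hqval : q.1 + μ₀ * (q.2 : ℝ) = m := by
    rw [hq, hval ρ', hρ'e]
  have hpq : p ≠ q := by
    intro hpqeq
    apply hρ'ne
    have h1 : ρm 1 = ρ' 1 := by
      have := congrArg Prod.fst hpqeq
      simp only [hp, hq] at this
      exact_mod_cast (neg_inj.mp this)
    have h0 : ρm 0 = ρ' 0 := by
      have := congrArg Prod.snd hpqeq
      simp only [hp, hq] at this
      omega
    ext κ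
    fin_cases κ
    · exact h0.symm
    · exact h1.symm
  refine ⟨Or.inr ⟨p, q, ⟨ρm, hρmc, rfl⟩, ⟨ρ', hρ'c, rfl⟩, hpq, by rw [hpval, hqval], ?_⟩, ?_⟩
  · rintro r ⟨σ, hσc, rfl⟩
    have hσmem : σ ∈ hcfin.toFinset := by simp [Set.Finite.mem_toFinset, hσc]
    have := hρmmin σ hσmem
    rw [hpval, hval σ]
    exact this
  -- rationality
  · have hp2q2 : p.2 ≠ q.2 := by
      intro h22
      apply hpq
      have : p.1 = q.1 := by
        have h2r : ((p.2 : ℕ) : ℝ) = ((q.2 : ℕ) : ℝ) := by exact_mod_cast h22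
        have := hpval.trans hqval.symm
        rw [h2r] at this
        linarith
      exact Prod.ext this h22
    have hp2q2' : (ρm 0 + ρm 1 : ℕ) ≠ (ρ' 0 + ρ' 1 : ℕ) := by
      simpa [hp, hq] using hp2q2
    have hden : ((ρm 0 + ρm 1 : ℕ) : ℝ) - ((ρ' 0 + ρ' 1 : ℕ) : ℝ) ≠ 0 := by
      refine sub_ne_zero.mpr ?_
      exact_mod_cast hp2q2'
    have key : μ₀ * (((ρm 0 + ρm 1 : ℕ) : ℝ) - ((ρ' 0 + ρ' 1 : ℕ) : ℝ))
        = ((ρm 1 : ℕ) : ℝ) - ((ρ' 1 : ℕ) : ℝ) := by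
      have := hpval.trans hqval.symm
      simp only [hp, hq] at this
      push_cast at this ⊢
      linear_combination this
    refine ⟨(((ρm 1 : ℕ) : ℚ) - ((ρ' 1 : ℕ) : ℚ)) /
        (((ρm 0 + ρm 1 : ℕ) : ℚ) - ((ρ' 0 + ρ' 1 : ℕ) : ℚ)), ?_⟩
    rw [Rat.cast_div]
    rw [eq_div_iff (by push_cast at hden ⊢; exact hden)]
    push_cast at key ⊢
    linarith
end

section
/- Let r(x) = c₀x^{ν₀}+⋯+c_k x^{ν_k} be a generalized polynomial with nonzero coefficients and ν₀<⋯<ν_k, let P₀ = P and P_{i+1} = P_i[c_i x^{ν_i}], and set Q = P_{k+1} = P[r(x)]. Then r(x) is an admissible generalized polynomial for P (i.e., Φ_{(P_i; ν_i)}(c_i) = 0 for i = 0,…,k) if and only if the bottom vertex of the element E_{ν_k}(Q) of co-slope ν_k of 𝒩(Q) has height ≥ 1. -/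
open Classical Filter

noncomputable section
open Classical

namespace Stmt15

lemma oneG_eq : oneG = monomialG 1 0 := rfl

lemma mulG_mono_right (f : ℝ → ℂ) (C : ℂ) (m : ℝ) (a : ℝ) :
    mulG f (monomialG C m) a = C * f (a - m) := by
  unfold mulG monomialG
  rw [finsum_eq_single _ (a - m)]
  · rw [if_pos (by ring), mul_comm]
  · intro x hx
    rw [if_neg fun h => hx (by linarith), mul_zero]

lemma mulG_mono_mono (C D : ℂ) (m m' : ℝ) :
    mulG (monomialG C m) (monomialG D m') = monomialG (C * D) (m + m') := by
  funext a
  rw [mulG_mono_right]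
  unfold monomialG
  by_cases h : a = m + m'
  · rw [if_pos (by linarith), if_pos h, mul_comm]
  · rw [if_neg fun hh => h (by linarith), if_neg h, mul_zero]

lemma powG_mono (C : ℂ) (m : ℝ) (j : ℕ) :
    powG (monomialG C m) j = monomialG (C ^ j) (j * m) := by
  induction j with
  | zero => funext a; simp [powG, oneG, monomialG]
  | succ k ih =>
      show mulG _ _ = _
      rw [ih, mulG_mono_mono, pow_succ',
        show ((k+1:ℕ):ℝ) * m = m + (k:ℝ) * m by push_cast; ring]

lemma foldr_mulG (l : List (ℂ × ℝ)) :
    (l.map fun p => monomialG p.1 p.2).foldr mulG oneG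
      = monomialG (l.map Prod.fst).prod ((l.map Prod.snd).sum) := by
  induction l with
  | nil => simp [oneG_eq]
  | cons p t ih => simp [List.foldr, ih, mulG_mono_mono]

lemma prodPow_mono {n : ℕ} (C : Fin (n+1) → ℂ) (m : Fin (n+1) → ℝ) (σ : Fin (n+1) →₀ ℕ) :
    prodPow (fun κ => monomialG (C κ) (m κ)) σ
      = monomialG (∏ κ, C κ ^ σ κ) (∑ κ, (σ κ : ℝ) * m κ) := by
  unfold prodPow
  have h1 : (List.ofFn (fun κ => powG (monomialG (C κ) (m κ)) (σ κ)))
      = (List.ofFn (fun κ : Fin (n+1) => ((C κ) ^ (σ κ), ((σ κ : ℝ)) * m κ))).map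
          (fun p => monomialG p.1 p.2) := by
    rw [List.map_ofFn]
    congr 1
    funext κ
    exact powG_mono _ _ _
  rw [h1, foldr_mulG]
  simp only [List.map_ofFn, List.prod_ofFn, List.sum_ofFn, Function.comp_def]

lemma dmuk_zero (dd : ℝ → ℂ) (ε ν : ℝ) : dmuk dd ε ν 0 = 1 := by
  simp [dmuk]

lemma dop_iter_mono (dd : ℝ → ℂ) (ε : ℝ) (c : ℂ) (ν : ℝ) (j : ℕ) :
    (Dop dd ε)^[j] (monomialG c ν) = monomialG (c * dmuk dd ε ν j) (ν - ε * j) := by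
  induction j with
  | zero => simp [dmuk]
  | succ k ih =>
      rw [Function.iterate_succ_apply', ih]
      funext a
      unfold Dop monomialG
      by_cases h : a = ν - ε * (k + 1 : ℕ)
      · have h2 : a + ε = ν - ε * k := by push_cast at h ⊢; linarith
        rw [if_pos h2, if_pos h, dmuk, dmuk, Finset.prod_range_succ]
        have h3 : ν - ε * k = a + ε := h2.symm
        ring_nf
        rw [h2]
        ring
      · have h2 : a + ε ≠ ν - ε * k := fun hh => h (by push_cast; linarith)
        rw [if_neg h2, if_neg h, mul_zero]

end Stmt15

namespace Stmt15

variable {n : ℕ}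

lemma totDeg_add (ρ σ : Fin (n+1) →₀ ℕ) : totDeg (ρ + σ) = totDeg ρ + totDeg σ := by
  unfold totDeg; simp [Finset.sum_add_distrib]

lemma wt_add (ρ σ : Fin (n+1) →₀ ℕ) : wt (ρ + σ) = wt ρ + wt σ := by
  unfold wt; simp [mul_add, Finset.sum_add_distrib]

lemma totDeg_zero : totDeg (0 : Fin (n+1) →₀ ℕ) = 0 := by simp [totDeg]
lemma wt_zero : wt (0 : Fin (n+1) →₀ ℕ) = 0 := by simp [wt]

lemma totDeg_eq_zero {ρ : Fin (n+1) →₀ ℕ} (h : totDeg ρ = 0) : ρ = 0 := by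
  unfold totDeg at h
  rw [Finset.sum_eq_zero_iff] at h
  ext κ
  simpa using h κ (Finset.mem_univ κ)

lemma totDeg_pos {σ : Fin (n+1) →₀ ℕ} (h : σ ≠ 0) : 1 ≤ totDeg σ := by
  rcases Nat.eq_zero_or_pos (totDeg σ) with h0 | h1
  · exact absurd (totDeg_eq_zero h0) h
  · exact h1

lemma binomProd_zero_left (σ : Fin (n+1) →₀ ℕ) : binomProd 0 σ = 1 := by
  unfold binomProd
  simp

/-- coefficient appearing in the substitution formula -/
def coefD (dd : ℝ → ℂ) (ε : ℝ) (c : ℂ) (ν : ℝ) (σ : Fin (n+1) →₀ ℕ) : ℂ :=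
  c ^ totDeg σ * ∏ κ : Fin (n+1), dmuk dd ε ν (κ : ℕ) ^ σ κ

/-- exponent shift appearing in the substitution formula -/
def expE (ε ν : ℝ) (σ : Fin (n+1) →₀ ℕ) : ℝ := ν * totDeg σ - ε * wt σ

lemma coefD_zero (dd : ℝ → ℂ) (ε : ℝ) (c : ℂ) (ν : ℝ) :
    coefD dd ε c ν (0 : Fin (n+1) →₀ ℕ) = 1 := by
  simp [coefD, totDeg_zero]

lemma expE_zero (ε ν : ℝ) : expE ε ν (0 : Fin (n+1) →₀ ℕ) = 0 := by
  simp [expE, totDeg_zero, wt_zero]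

lemma subMon_apply (dd : ℝ → ℂ) (ε : ℝ) (P : PolyG n) (c : ℂ) (ν : ℝ)
    (ρ : Fin (n+1) →₀ ℕ) (a : ℝ) :
    subMon dd ε P c ν ρ a
      = ∑ᶠ σ : Fin (n+1) →₀ ℕ,
          binomProd ρ σ * (coefD dd ε c ν σ * P (ρ + σ) (a - expE ε ν σ)) := by
  unfold subMon fullSub
  apply finsum_congr; intro σ
  have hv : (fun κ : Fin (n+1) => (Dop dd ε)^[(κ : ℕ)] (monomialG c ν))
      = fun κ : Fin (n+1) => monomialG (c * dmuk dd ε ν (κ : ℕ)) (ν - ε * (κ : ℕ)) := by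
    funext κ; exact dop_iter_mono dd ε c ν κ
  rw [hv, prodPow_mono, mulG_mono_right]
  have hcoef : (∏ κ : Fin (n+1), (c * dmuk dd ε ν (κ : ℕ)) ^ σ κ) = coefD dd ε c ν σ := by
    unfold coefD totDeg
    rw [← Finset.prod_pow_eq_pow_sum, ← Finset.prod_mul_distrib]
    exact Finset.prod_congr rfl fun κ _ => mul_pow _ _ _
  have hexp : (∑ κ : Fin (n+1), (σ κ : ℝ) * (ν - ε * (κ : ℕ))) = expE ε ν σ := by
    unfold expE totDeg wt
    push_cast
    rw [Finset.mul_sum, Finset.mul_sum, ← Finset.sum_sub_distrib]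
    exact Finset.sum_congr rfl fun κ _ => by ring
  rw [hcoef, hexp]

end Stmt15

namespace Stmt15

variable {n : ℕ}

lemma binomProd_zero_right (ρ : Fin (n+1) →₀ ℕ) : binomProd ρ 0 = 1 := by
  unfold binomProd
  simp

lemma mem_cloud_zero {ε : ℝ} {P : PolyG n} {a : ℝ} (h : P 0 a ≠ 0) :
    ((a, 0) : ℝ × ℕ) ∈ cloud ε P :=
  ⟨0, totDeg_zero, by simpa [wt_zero] using h⟩

lemma cloud_zero_val {ε : ℝ} {P : PolyG n} {a : ℝ} (h : ((a, 0) : ℝ × ℕ) ∈ cloud ε P) :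
    P 0 a ≠ 0 := by
  obtain ⟨ρ, hρ, hv⟩ := h
  have hz : ρ = 0 := totDeg_eq_zero hρ
  subst hz
  simpa [wt_zero] using hv

/-- preservation of the lower bound of cloud functionals under substitution -/
lemma cloud_subMon_lb (dd : ℝ → ℂ) (ε : ℝ) (P : PolyG n) (c : ℂ) (ν μ L : ℝ)
    (hμν : μ ≤ ν) (hP : ∀ p ∈ cloud ε P, L ≤ p.1 + μ * p.2) :
    ∀ p ∈ cloud ε (subMon dd ε P c ν), L ≤ p.1 + μ * p.2 := by
  rintro ⟨β, r⟩ ⟨ρ, hρ, hval⟩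
  by_contra hlt
  push_neg at hlt
  simp only at hlt hρ
  apply hval
  rw [subMon_apply]
  apply finsum_eq_zero_of_forall_eq_zero
  intro σ
  have hz : P (ρ + σ) ((β - ν * totDeg σ) + ε * wt (ρ + σ)) = 0 := by
    by_contra hnz
    have hmem : ((β - ν * totDeg σ, totDeg (ρ + σ)) : ℝ × ℕ) ∈ cloud ε P :=
      ⟨ρ + σ, rfl, hnz⟩
    have hle := hP _ hmem
    simp only [totDeg_add, hρ] at hle
    have ht : (0 : ℝ) ≤ (totDeg σ : ℝ) := Nat.cast_nonneg _
    push_cast at hle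
    nlinarith
  have heq : β + ε * (wt ρ : ℝ) - expE ε ν σ = (β - ν * totDeg σ) + ε * wt (ρ + σ) := by
    unfold expE; rw [wt_add]; push_cast; ring
  rw [heq, hz, mul_zero, mul_zero]

/-- persistence of the height-0 value under substitution with larger exponent -/
lemma subMon_zero_val (dd : ℝ → ℂ) (ε : ℝ) (P : PolyG n) (c : ℂ) (ν μ a0 : ℝ)
    (hμν : μ < ν) (hP : ∀ p ∈ cloud ε P, a0 ≤ p.1 + μ * p.2) :
    subMon dd ε P c ν 0 a0 = P 0 a0 := by
  rw [subMon_apply, finsum_eq_single _ 0]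
  · rw [binomProd_zero_right, coefD_zero, expE_zero]
    simp
  · intro σ hσ
    have hz : P (0 + σ) (a0 - expE ε ν σ) = 0 := by
      by_contra hnz
      have h1 : 1 ≤ totDeg σ := totDeg_pos hσ
      have heq : a0 - expE ε ν σ = (a0 - ν * totDeg σ) + ε * wt (0 + σ) := by
        unfold expE; rw [zero_add]; push_cast; ring
      have hmem : ((a0 - ν * totDeg σ, totDeg (0 + σ)) : ℝ × ℕ) ∈ cloud ε P :=
        ⟨0 + σ, rfl, by rw [← heq]; exact hnz⟩
      have hle := hP _ hmem
      simp only [totDeg_add, totDeg_zero, Nat.zero_add] at hle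
      have ht : (1 : ℝ) ≤ (totDeg σ : ℝ) := by exact_mod_cast h1
      push_cast at hle
      nlinarith
    rw [hz, mul_zero, mul_zero]

lemma exists_min_of_locally_finite {S : Set ℝ} (hne : S.Nonempty)
    (hfin : ∀ B : ℝ, {x | x ∈ S ∧ x ≤ B}.Finite) :
    ∃ m ∈ S, ∀ x ∈ S, m ≤ x := by
  obtain ⟨b, hb⟩ := hne
  have h1 := hfin b
  have hne2 : h1.toFinset.Nonempty := ⟨b, by simp [hb]⟩
  obtain ⟨m, hm, hmin⟩ := h1.toFinset.exists_min_image id hne2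
  rw [Set.Finite.mem_toFinset] at hm
  refine ⟨m, hm.1, fun x hx => ?_⟩
  by_cases hxb : x ≤ b
  · exact hmin x (by rw [Set.Finite.mem_toFinset]; exact ⟨hx, hxb⟩)
  · have : m ≤ b := hm.2
    linarith

/-- the set of values of the functional on the cloud -/
def funcSet (ε μ : ℝ) (P : PolyG n) : Set ℝ :=
  (fun p : ℝ × ℕ => p.1 + μ * p.2) '' cloud ε P

lemma lineMin_eq (ε μ : ℝ) (P : PolyG n) : lineMin ε μ P = sInf (funcSet ε μ P) := rfl

lemma funcSet_locfin {ε : ℝ} {P : PolyG n} (μ : ℝ)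
    (hPfin : (Function.support P).Finite) (hOm : ∀ ρ, OmegaSupp (P ρ)) (B : ℝ) :
    {x | x ∈ funcSet ε μ P ∧ x ≤ B}.Finite := by
  have hsub : {x | x ∈ funcSet ε μ P ∧ x ≤ B} ⊆
      ⋃ ρ ∈ hPfin.toFinset,
        (fun a : ℝ => a - ε * wt ρ + μ * totDeg ρ) ''
          {a : ℝ | P ρ a ≠ 0 ∧ a ≤ B + ε * wt ρ - μ * totDeg ρ} := by
    rintro x ⟨⟨p, ⟨ρ, hdeg, hval⟩, rfl⟩, hxB⟩
    have hρmem : ρ ∈ hPfin.toFinset := by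
      rw [Set.Finite.mem_toFinset, Function.mem_support]
      intro h0
      rw [h0] at hval
      exact hval rfl
    refine Set.mem_biUnion hρmem ⟨p.1 + ε * wt ρ, ⟨hval, ?_⟩, ?_⟩
    · simp only at hxB
      rw [← hdeg] at hxB
      linarith
    · simp only
      rw [← hdeg]
      ring
  refine Set.Finite.subset ?_ hsub
  apply Set.Finite.biUnion hPfin.toFinset.finite_toSet
  intro ρ _
  exact (hOm ρ (B + ε * wt ρ - μ * totDeg ρ)).image _

lemma cloud_nonempty {ε : ℝ} {P : PolyG n} (hne : P ≠ 0) : (cloud ε P).Nonempty := by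
  obtain ⟨ρ, hρ⟩ := Function.ne_iff.1 hne
  obtain ⟨a, ha⟩ := Function.ne_iff.1 hρ
  exact ⟨(a - ε * wt ρ, totDeg ρ), ρ, rfl, by rwa [sub_add_cancel]⟩

lemma lineMin_spec {ε : ℝ} {P : PolyG n} (μ : ℝ) (hne : P ≠ 0)
    (hPfin : (Function.support P).Finite) (hOm : ∀ ρ, OmegaSupp (P ρ)) :
    lineMin ε μ P ∈ funcSet ε μ P ∧ ∀ x ∈ funcSet ε μ P, lineMin ε μ P ≤ x := by
  have hfne : (funcSet ε μ P).Nonempty := (cloud_nonempty hne).image _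
  obtain ⟨m, hm, hlb⟩ :=
    exists_min_of_locally_finite hfne (funcSet_locfin μ hPfin hOm)
  have hinf : sInf (funcSet ε μ P) = m :=
    le_antisymm (csInf_le ⟨m, fun x hx => hlb x hx⟩ hm) (le_csInf hfne hlb)
  rw [lineMin_eq, hinf]
  exact ⟨hm, hlb⟩

lemma cloud_lb {ε : ℝ} {P : PolyG n} (μ : ℝ) (hne : P ≠ 0)
    (hPfin : (Function.support P).Finite) (hOm : ∀ ρ, OmegaSupp (P ρ)) :
    ∀ p ∈ cloud ε P, lineMin ε μ P ≤ p.1 + μ * p.2 :=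
  fun p hp => (lineMin_spec μ hne hPfin hOm).2 _ ⟨p, hp, rfl⟩

end Stmt15

namespace Stmt15

variable {n : ℕ}

/-- the top point of the element survives the substitution -/
lemma subMon_top (dd : ℝ → ℂ) (ε : ℝ) (P : PolyG n) (c : ℂ) (ν : ℝ)
    (hne : P ≠ 0) (hPfin : (Function.support P).Finite) (hOm : ∀ ρ, OmegaSupp (P ρ)) :
    ∃ p : ℝ × ℕ, p ∈ cloud ε (subMon dd ε P c ν) ∧ p.1 + ν * p.2 = lineMin ε ν P := by
  set L := lineMin ε ν P with hL
  obtain ⟨hmem, hlb⟩ := lineMin_spec (ε := ε) ν hne hPfin hOm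
  set Hs : Set ℕ :=
    {h : ℕ | ∃ ρ : Fin (n+1) →₀ ℕ, totDeg ρ = h ∧ P ρ ((L - ν * h) + ε * wt ρ) ≠ 0} with hHs
  have hHfin : Hs.Finite := by
    apply (hPfin.image totDeg).subset
    rintro h ⟨ρ, hdeg, hval⟩
    exact ⟨ρ, fun h0 => hval (by rw [h0]; rfl), hdeg⟩
  have hHne : Hs.Nonempty := by
    obtain ⟨p, hp, hfunc⟩ := hmem
    obtain ⟨ρ, hdeg, hval⟩ := hp
    refine ⟨p.2, ρ, hdeg, ?_⟩
    have h1 : L - ν * p.2 = p.1 := by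
      simp only at hfunc; linarith
    rw [h1]; exact hval
  have hne2 : hHfin.toFinset.Nonempty := by
    obtain ⟨h, hh⟩ := hHne; exact ⟨h, by rwa [Set.Finite.mem_toFinset]⟩
  obtain ⟨m, hmF, hmax⟩ := hHfin.toFinset.exists_max_image id hne2
  rw [Set.Finite.mem_toFinset] at hmF
  obtain ⟨ρ₀, hdeg₀, hval₀⟩ := hmF
  set a : ℝ := (L - ν * m) + ε * wt ρ₀ with ha
  have hkey : subMon dd ε P c ν ρ₀ a = P ρ₀ a := by
    rw [subMon_apply, finsum_eq_single _ 0]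
    · rw [binomProd_zero_right, coefD_zero, expE_zero]; simp
    · intro σ hσ
      have hz : P (ρ₀ + σ) (a - expE ε ν σ) = 0 := by
        by_contra hnz
        have hcd : totDeg (ρ₀ + σ) ∈ Hs := by
          refine ⟨ρ₀ + σ, rfl, ?_⟩
          have heq : (L - ν * (totDeg (ρ₀ + σ) : ℝ)) + ε * wt (ρ₀ + σ)
              = a - expE ε ν σ := by
            rw [totDeg_add, wt_add, hdeg₀, ha]
            unfold expE
            push_cast
            ring
          rw [heq]; exact hnz
        have hle : totDeg (ρ₀ + σ) ≤ m := by
          have := hmax _ (hHfin.mem_toFinset.2 hcd); simpa using this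
        rw [totDeg_add, hdeg₀] at hle
        have := totDeg_pos hσ
        omega
      rw [hz, mul_zero, mul_zero]
  refine ⟨(L - ν * m, m), ⟨ρ₀, hdeg₀, ?_⟩, by simp⟩
  show subMon dd ε P c ν ρ₀ ((L - ν * m) + ε * wt ρ₀) ≠ 0
  rw [← ha, hkey]
  exact hval₀

/-- the characteristic polynomial value equals the height-0 coefficient of the
substituted polynomial evaluated on the line -/
lemma phiAt_eq_subMon (dd : ℝ → ℂ) (ε : ℝ) (P : PolyG n) (μ : ℝ) (C : ℂ)
    (hPfin : (Function.support P).Finite) :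
    phiAt dd ε P μ C = subMon dd ε P C μ 0 (lineMin ε μ P) := by
  set L := lineMin ε μ P with hLdef
  set Sf := hPfin.toFinset with hSf
  set Hf := Sf.image totDeg with hHf
  have hmemS : ∀ {ρ : Fin (n+1) →₀ ℕ} {x : ℝ}, P ρ x ≠ 0 → ρ ∈ Sf := by
    intro ρ x hx
    rw [hSf, Set.Finite.mem_toFinset, Function.mem_support]
    exact fun h0 => hx (by rw [h0]; rfl)
  -- RHS
  have hR : subMon dd ε P C μ 0 L
      = ∑ σ ∈ Sf, binomProd 0 σ * (coefD dd ε C μ σ * P (0 + σ) (L - expE ε μ σ)) := by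
    rw [subMon_apply]
    apply finsum_eq_sum_of_support_subset
    intro σ hσ
    rw [Function.mem_support] at hσ
    by_contra hns
    apply hσ
    have : P (0 + σ) (L - expE ε μ σ) = 0 := by
      by_contra hz
      have h2 := hmemS hz
      rw [zero_add] at h2
      exact hns h2
    rw [this, mul_zero, mul_zero]
  -- LHS: inner psi sums
  have hpsi : ∀ h : ℕ, psiAt dd ε P (L - μ * h, h) μ
      = ∑ ρ ∈ Sf, (if totDeg ρ = h then
          P ρ ((L - μ * h) + ε * wt ρ) * ∏ κ : Fin (n+1), dmuk dd ε μ (κ : ℕ) ^ ρ κ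
        else 0) := by
    intro h
    unfold psiAt
    apply finsum_eq_sum_of_support_subset
    intro ρ hρ
    rw [Function.mem_support] at hρ
    by_contra hns
    apply hρ
    rcases eq_or_ne (totDeg ρ) h with he | he
    · rw [if_pos he]
      have : P ρ ((L - μ * h, h).1 + ε * wt ρ) = 0 := by
        by_contra hz; exact hns (hmemS hz)
      rw [this, zero_mul]
    · rw [if_neg he]
  have hL2 : phiAt dd ε P μ C
      = ∑ h ∈ Hf, psiAt dd ε P (L - μ * h, h) μ * C ^ h := by
    unfold phiAt
    apply finsum_eq_sum_of_support_subset
    intro h hh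
    rw [Function.mem_support] at hh
    by_contra hns
    apply hh
    rw [hpsi h]
    have : ∀ ρ ∈ Sf, (if totDeg ρ = h then
        P ρ ((L - μ * h) + ε * wt ρ) * ∏ κ : Fin (n+1), dmuk dd ε μ (κ : ℕ) ^ ρ κ
      else 0) = 0 := by
      intro ρ hρ
      rw [if_neg]
      intro he
      exact hns (by rw [hHf]; exact Finset.mem_image.2 ⟨ρ, hρ, he⟩)
    rw [Finset.sum_congr rfl this, Finset.sum_const_zero, zero_mul]
  rw [hL2, hR]
  have hstep : ∀ h ∈ Hf, psiAt dd ε P (L - μ * h, h) μ * C ^ h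
      = ∑ ρ ∈ Sf, (if totDeg ρ = h then
          (P ρ ((L - μ * (totDeg ρ : ℕ)) + ε * wt ρ)
            * ∏ κ : Fin (n+1), dmuk dd ε μ (κ : ℕ) ^ ρ κ) * C ^ (totDeg ρ)
        else 0) := by
    intro h _
    rw [hpsi h, Finset.sum_mul]
    apply Finset.sum_congr rfl
    intro ρ _
    rcases eq_or_ne (totDeg ρ) h with he | he
    · rw [if_pos he, if_pos he, he]
    · rw [if_neg he, if_neg he, zero_mul]
  rw [Finset.sum_congr rfl hstep, Finset.sum_comm]
  apply Finset.sum_congr rfl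
  intro ρ hρ
  have hmemH : totDeg ρ ∈ Hf := by rw [hHf]; exact Finset.mem_image.2 ⟨ρ, hρ, rfl⟩
  rw [Finset.sum_ite_eq Hf (totDeg ρ), if_pos hmemH]
  rw [binomProd_zero_left, zero_add, one_mul]
  unfold coefD expE
  have harg : L - (μ * (totDeg ρ : ℕ) - ε * wt ρ) = (L - μ * (totDeg ρ : ℕ)) + ε * wt ρ := by
    ring
  rw [harg]
  ring

/-- finiteness of the coefficient support is preserved -/
lemma support_subMon_finite (dd : ℝ → ℂ) (ε : ℝ) (P : PolyG n) (c : ℂ) (ν : ℝ)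
    (hPfin : (Function.support P).Finite) :
    (Function.support (subMon dd ε P c ν)).Finite := by
  have hsub : Function.support (subMon dd ε P c ν) ⊆
      ⋃ τ ∈ hPfin.toFinset, Set.Iic τ := by
    intro ρ hρ
    rw [Function.mem_support] at hρ
    obtain ⟨a, ha⟩ := Function.ne_iff.1 hρ
    rw [subMon_apply] at ha
    have hex : ∃ σ, binomProd ρ σ * (coefD dd ε c ν σ * P (ρ + σ) (a - expE ε ν σ)) ≠ 0 := by
      by_contra hall
      push_neg at hall
      exact ha (finsum_eq_zero_of_forall_eq_zero hall)
    obtain ⟨σ, hσ⟩ := hex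
    have hPσ : P (ρ + σ) ≠ 0 := by
      intro h0
      apply hσ
      rw [show P (ρ + σ) (a - expE ε ν σ) = 0 from by rw [h0]; rfl, mul_zero, mul_zero]
    refine Set.mem_iUnion₂.2 ⟨ρ + σ, ?_, self_le_add_right ρ σ⟩
    rwa [Set.Finite.mem_toFinset, Function.mem_support]
  apply Set.Finite.subset ?_ hsub
  apply Set.Finite.biUnion hPfin.toFinset.finite_toSet
  intro τ _
  exact Set.finite_Iic τ

/-- the Ω-condition on coefficients is preserved -/
lemma omegaSupp_subMon (dd : ℝ → ℂ) (ε : ℝ) (P : PolyG n) (c : ℂ) (ν : ℝ)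
    (hPfin : (Function.support P).Finite) (hOm : ∀ ρ, OmegaSupp (P ρ))
    (ρ : Fin (n+1) →₀ ℕ) : OmegaSupp (subMon dd ε P c ν ρ) := by
  intro B
  have hinj : Function.Injective (fun σ : Fin (n+1) →₀ ℕ => ρ + σ) :=
    fun x y h => by simpa using h
  have hTfin : {σ : Fin (n+1) →₀ ℕ | P (ρ + σ) ≠ 0}.Finite := by
    have : {σ : Fin (n+1) →₀ ℕ | P (ρ + σ) ≠ 0}
        = (fun σ : Fin (n+1) →₀ ℕ => ρ + σ) ⁻¹' (Function.support P) := rfl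
    rw [this]
    exact Set.Finite.preimage hinj.injOn hPfin
  have hsub : {a : ℝ | subMon dd ε P c ν ρ a ≠ 0 ∧ a ≤ B} ⊆
      ⋃ σ ∈ hTfin.toFinset,
        (fun b : ℝ => b + expE ε ν σ) '' {b : ℝ | P (ρ + σ) b ≠ 0 ∧ b ≤ B - expE ε ν σ} := by
    rintro a ⟨ha, haB⟩
    rw [subMon_apply] at ha
    have hex : ∃ σ, binomProd ρ σ * (coefD dd ε c ν σ * P (ρ + σ) (a - expE ε ν σ)) ≠ 0 := by
      by_contra hall
      push_neg at hall
      exact ha (finsum_eq_zero_of_forall_eq_zero hall)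
    obtain ⟨σ, hσ⟩ := hex
    have hPval : P (ρ + σ) (a - expE ε ν σ) ≠ 0 := by
      intro h0; apply hσ; rw [h0, mul_zero, mul_zero]
    have hσT : σ ∈ hTfin.toFinset := by
      rw [Set.Finite.mem_toFinset]
      exact fun h0 => hPval (by rw [h0]; rfl)
    exact Set.mem_iUnion₂.2 ⟨σ, hσT, ⟨a - expE ε ν σ, ⟨hPval, by linarith⟩, by ring⟩⟩
  apply Set.Finite.subset ?_ hsub
  apply Set.Finite.biUnion hTfin.toFinset.finite_toSet
  intro σ _
  exact ((hOm (ρ + σ)) (B - expE ε ν σ)).image _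

lemma subMon_ne_zero (dd : ℝ → ℂ) (ε : ℝ) (P : PolyG n) (c : ℂ) (ν : ℝ)
    (hne : P ≠ 0) (hPfin : (Function.support P).Finite) (hOm : ∀ ρ, OmegaSupp (P ρ)) :
    subMon dd ε P c ν ≠ 0 := by
  obtain ⟨p, hp, _⟩ := subMon_top dd ε P c ν hne hPfin hOm
  obtain ⟨ρ, _, hval⟩ := hp
  intro h0
  rw [h0] at hval
  exact hval rfl

end Stmt15

namespace Stmt15

variable {n : ℕ}

lemma botHeight_one_le_iff {ε μ : ℝ} {Q : PolyG n} :
    1 ≤ botHeight ε μ Q ↔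
      (Eelem ε μ Q).Nonempty ∧ ∀ a : ℝ, ((a, 0) : ℝ × ℕ) ∉ Eelem ε μ Q := by
  unfold botHeight
  constructor
  · intro h
    have hsne : (Prod.snd '' Eelem ε μ Q).Nonempty := by
      by_contra he
      rw [Set.not_nonempty_iff_eq_empty] at he
      rw [he, Nat.sInf_empty] at h
      omega
    refine ⟨hsne.of_image, fun a ha => ?_⟩
    have h0 : 0 ∈ Prod.snd '' Eelem ε μ Q := ⟨(a, 0), ha, rfl⟩
    have := Nat.sInf_le h0
    omega
  · rintro ⟨hne, h0⟩
    by_contra h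
    push_neg at h
    have hz : sInf (Prod.snd '' Eelem ε μ Q) = 0 := by omega
    rw [Nat.sInf_eq_zero] at hz
    rcases hz with hmem | hempty
    · obtain ⟨p, hp, hsnd⟩ := hmem
      obtain ⟨p1, p2⟩ := p
      simp only at hsnd
      subst hsnd
      exact h0 p1 hp
    · rw [Set.image_eq_empty] at hempty
      rw [hempty] at hne
      exact Set.not_nonempty_empty hne

/-- The one-step characterization: `Φ_{(P;ν)}(c) = 0` iff the bottom of
`E_ν(P[c x^ν])` has height at least 1. -/
lemma one_step (dd : ℝ → ℂ) (ε : ℝ) (P : PolyG n) (c : ℂ) (ν : ℝ)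
    (hne : P ≠ 0) (hPfin : (Function.support P).Finite) (hOm : ∀ ρ, OmegaSupp (P ρ)) :
    phiAt dd ε P ν c = 0 ↔ 1 ≤ botHeight ε ν (subMon dd ε P c ν) := by
  set R := subMon dd ε P c ν with hRdef
  set L := lineMin ε ν P with hLdef
  have hlbP := cloud_lb (ε := ε) ν hne hPfin hOm
  have hlbR : ∀ p ∈ cloud ε R, L ≤ p.1 + ν * p.2 :=
    cloud_subMon_lb dd ε P c ν ν L le_rfl hlbP
  obtain ⟨pt, hptc, hptf⟩ := subMon_top dd ε P c ν hne hPfin hOm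
  have hLR : lineMin ε ν R = L := by
    rw [lineMin_eq]
    apply le_antisymm
    · exact csInf_le ⟨L, by rintro x ⟨p, hp, rfl⟩; exact hlbR p hp⟩ ⟨pt, hptc, hptf⟩
    · exact le_csInf ⟨_, ⟨pt, hptc, rfl⟩⟩ (by rintro x ⟨p, hp, rfl⟩; exact hlbR p hp)
  have hphi : phiAt dd ε P ν c = R 0 L := phiAt_eq_subMon dd ε P ν c hPfin
  rw [botHeight_one_le_iff]
  constructor
  · intro hphi0
    refine ⟨⟨pt, hptc, by rw [hLR]; exact hptf⟩, ?_⟩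
    rintro a ⟨hac, haf⟩
    simp only at haf
    have ha : a = L := by
      rw [hLR] at haf
      push_cast at haf
      linarith
    have hval := cloud_zero_val hac
    rw [ha] at hval
    rw [hphi] at hphi0
    exact hval hphi0
  · rintro ⟨hEne, h0⟩
    by_contra hphin
    have hR0 : R 0 L ≠ 0 := by rw [← hphi]; exact hphin
    exact h0 L ⟨mem_cloud_zero hR0, by simp [hLR]⟩

/-- invariant used for the persistence of a height-0 vertex -/
def Inv (ε μ a0 : ℝ) (P : PolyG n) : Prop :=
  ((a0, 0) : ℝ × ℕ) ∈ cloud ε P ∧ ∀ p ∈ cloud ε P, a0 ≤ p.1 + μ * p.2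

lemma Inv_subMon (dd : ℝ → ℂ) (ε : ℝ) (P : PolyG n) (c : ℂ) (ν μ a0 : ℝ)
    (hμν : μ < ν) (h : Inv ε μ a0 P) : Inv ε μ a0 (subMon dd ε P c ν) := by
  obtain ⟨h1, h2⟩ := h
  refine ⟨?_, cloud_subMon_lb dd ε P c ν μ a0 (le_of_lt hμν) h2⟩
  apply mem_cloud_zero
  rw [subMon_zero_val dd ε P c ν μ a0 hμν h2]
  exact cloud_zero_val h1

lemma Inv_bot_zero (ε μ a0 ν' : ℝ) (P : PolyG n) (hμν' : μ ≤ ν')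
    (h : Inv ε μ a0 P) : botHeight ε ν' P = 0 := by
  obtain ⟨h1, h2⟩ := h
  have hlb' : ∀ p ∈ cloud ε P, a0 ≤ p.1 + ν' * p.2 := by
    intro p hp
    have hmul : μ * p.2 ≤ ν' * p.2 := mul_le_mul_of_nonneg_right hμν' (Nat.cast_nonneg _)
    linarith [h2 p hp]
  have hLm : lineMin ε ν' P = a0 := by
    rw [lineMin_eq]
    apply le_antisymm
    · exact csInf_le ⟨a0, by rintro x ⟨p, hp, rfl⟩; exact hlb' p hp⟩ ⟨(a0, 0), h1, by simp⟩
    · exact le_csInf ⟨_, ⟨(a0, 0), h1, rfl⟩⟩ (by rintro x ⟨p, hp, rfl⟩; exact hlb' p hp)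
  unfold botHeight
  rw [Nat.sInf_eq_zero]
  left
  exact ⟨(a0, 0), ⟨h1, by simp [hLm]⟩, rfl⟩

lemma seqSub_shift (dd : ℝ → ℂ) (ε : ℝ) (P : PolyG n) (c : ℕ → ℂ) (ν : ℕ → ℝ) :
    ∀ i, seqSub dd ε (subMon dd ε P (c 0) (ν 0))
        (fun j => c (j+1)) (fun j => ν (j+1)) i = seqSub dd ε P c ν (i+1)
  | 0 => rfl
  | (i+1) => by
      show subMon dd ε
          (seqSub dd ε (subMon dd ε P (c 0) (ν 0)) (fun j => c (j+1)) (fun j => ν (j+1)) i)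
          (c (i+1)) (ν (i+1)) = _
      rw [seqSub_shift dd ε P c ν i]
      rfl

lemma seqSub_props (dd : ℝ → ℂ) (ε : ℝ) (P : PolyG n) (c : ℕ → ℂ) (ν : ℕ → ℝ)
    (hPfin : (Function.support P).Finite) (hOm : ∀ ρ, OmegaSupp (P ρ)) (hne : P ≠ 0) :
    ∀ i, (Function.support (seqSub dd ε P c ν i)).Finite ∧
      (∀ ρ, OmegaSupp (seqSub dd ε P c ν i ρ)) ∧ seqSub dd ε P c ν i ≠ 0
  | 0 => ⟨hPfin, hOm, hne⟩
  | (i+1) => by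
      obtain ⟨h1, h2, h3⟩ := seqSub_props dd ε P c ν hPfin hOm hne i
      exact ⟨support_subMon_finite dd ε _ _ _ h1,
        omegaSupp_subMon dd ε _ _ _ h1 h2,
        subMon_ne_zero dd ε _ _ _ h3 h1 h2⟩

lemma main_theorem (dd : ℝ → ℂ) (ε : ℝ) :
    ∀ (k : ℕ) (P : PolyG n) (c : ℕ → ℂ) (ν : ℕ → ℝ),
      (Function.support P).Finite → (∀ ρ, OmegaSupp (P ρ)) → P ≠ 0 →
      (∀ i < k, ν i < ν (i+1)) →
      (AdmissibleUpTo dd ε P c ν k ↔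
        1 ≤ botHeight ε (ν k) (seqSub dd ε P c ν (k+1))) := by
  intro k
  induction k with
  | zero =>
      intro P c ν hPfin hOm hne _
      have h0 : AdmissibleUpTo dd ε P c ν 0 ↔ phiAt dd ε P (ν 0) (c 0) = 0 := by
        constructor
        · intro h; exact h 0 le_rfl
        · intro h i hi
          interval_cases i
          exact h
      rw [h0]
      exact one_step dd ε P (c 0) (ν 0) hne hPfin hOm
  | succ k IH =>
      intro P c ν hPfin hOm hne hν
      set P₁ := subMon dd ε P (c 0) (ν 0) with hP₁
      have hfin1 : (Function.support P₁).Finite := support_subMon_finite dd ε P _ _ hPfin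
      have hOm1 : ∀ ρ, OmegaSupp (P₁ ρ) := omegaSupp_subMon dd ε P _ _ hPfin hOm
      have hne1 : P₁ ≠ 0 := subMon_ne_zero dd ε P _ _ hne hPfin hOm
      have hν' : ∀ i < k, (fun j => ν (j+1)) i < (fun j => ν (j+1)) (i+1) :=
        fun i hi => hν (i+1) (by omega)
      have IH' := IH P₁ (fun j => c (j+1)) (fun j => ν (j+1)) hfin1 hOm1 hne1 hν'
      rw [seqSub_shift dd ε P c ν (k+1)] at IH'
      -- split the admissibility condition
      have hsplit : AdmissibleUpTo dd ε P c ν (k+1) ↔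
          (phiAt dd ε P (ν 0) (c 0) = 0 ∧
            AdmissibleUpTo dd ε P₁ (fun j => c (j+1)) (fun j => ν (j+1)) k) := by
        constructor
        · intro h
          refine ⟨h 0 (by omega), fun i hi => ?_⟩
          have h2 := h (i+1) (by omega)
          rw [seqSub_shift dd ε P c ν i]
          exact h2
        · rintro ⟨h0, h1⟩ i hi
          match i with
          | 0 => exact h0
          | (i+1) =>
              have h2 := h1 i (by omega)
              rw [seqSub_shift dd ε P c ν i] at h2
              exact h2
      rw [hsplit, IH']
      -- it remains to show the first condition is implied
      constructor
      · exact fun h => h.2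
      · intro hX
        refine ⟨?_, hX⟩
        by_contra hphin
        -- persistence of the height-0 vertex
        set a0 := lineMin ε (ν 0) P with ha0
        have hphi := phiAt_eq_subMon dd ε P (ν 0) (c 0) hPfin
        have hval : P₁ 0 a0 ≠ 0 := by
          show subMon dd ε P (c 0) (ν 0) 0 (lineMin ε (ν 0) P) ≠ 0
          rw [← hphi]
          exact hphin
        have hInv1 : Inv ε (ν 0) a0 P₁ :=
          ⟨mem_cloud_zero hval,
            cloud_subMon_lb dd ε P (c 0) (ν 0) (ν 0) a0 le_rfl
              (cloud_lb (ν 0) hne hPfin hOm)⟩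
        have hν0lt : ∀ j, 1 ≤ j → j ≤ k + 1 → ν 0 < ν j := by
          intro j
          induction j with
          | zero => omega
          | succ j ihj =>
              intro _ hj2
              rcases Nat.eq_zero_or_pos j with hj0 | hj1
              · subst hj0; exact hν 0 (by omega)
              · exact lt_trans (ihj hj1 (by omega)) (hν j (by omega))
        have hchain : ∀ j ≤ k + 1, Inv ε (ν 0) a0 (seqSub dd ε P c ν (j+1)) := by
          intro j
          induction j with
          | zero => intro _; exact hInv1
          | succ j ihj =>
              intro hj
              have hprev := ihj (by omega)
              exact Inv_subMon dd ε _ (c (j+1)) (ν (j+1)) (ν 0) a0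
                (hν0lt (j+1) (by omega) hj) hprev
        have hInvQ := hchain (k+1) le_rfl
        have hbot := Inv_bot_zero ε (ν 0) a0 (ν (k+1)) _
          (le_of_lt (hν0lt (k+1) (by omega) le_rfl)) hInvQ
        rw [hbot] at hX
        omega

end Stmt15


/-- characterization of admissible generalized polynomials via
the Newton polygon of `Q = P[r(x)]`. -/
theorem stmt15 (dd : ℝ → ℂ) (ε : ℝ) (hop : IsAdmissibleOp dd ε)
    (n : ℕ) (P : PolyG n)
    (hPfin : (Function.support P).Finite) (hPcoef : ∀ ρ, OmegaSupp (P ρ))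
    (hP : P ≠ 0) (k : ℕ) (c : ℕ → ℂ) (ν : ℕ → ℝ)
    (hν : ∀ i < k, ν i < ν (i+1)) (hc : ∀ i ≤ k, c i ≠ 0)
    (Q : PolyG n) (hQ : Q = seqSub dd ε P c ν (k+1)) :
    AdmissibleUpTo dd ε P c ν k ↔ 1 ≤ botHeight ε (ν k) Q := by
  subst hQ
  exact Stmt15.main_theorem dd ε k P c ν hPfin hPcoef hP hν
end
end

section
/- Let r(x) be an admissible generalized polynomial for the equation P = 0 and Q = P[r(x)]. Then either r(x) is itself a solution of P = 0, or the Newton polygon 𝒩(Q) has a side E_ν(Q) with co-slope ν strictly greater than max(supp r(x)). -/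
open Classical Filter

noncomputable section
-- Section A
abbrev AMA := AddMonoidAlgebra ℂ ℝ

def phiF (F : AMA) : ℝ → ℂ := fun a => F.coeff a

/-- the linear functional underlying `mulG f (phiF U) a`. -/
def ellF (f : ℝ → ℂ) (a : ℝ) : AMA →+ ℂ where
  toFun U := U.coeff.sum fun m cm => f (a - m) * cm
  map_zero' := Finsupp.sum_zero_index
  map_add' := fun U V => by
    rw [AddMonoidAlgebra.coeff_add]
    exact Finsupp.sum_add_index (by intro m _; simp) (by intro m _ c d; ring)

lemma ellF_single (f : ℝ → ℂ) (a m : ℝ) (c : ℂ) :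
    ellF f a (AddMonoidAlgebra.single m c) = f (a - m) * c := by
  show (AddMonoidAlgebra.single m c).coeff.sum (fun m' cm => f (a - m') * cm) = _
  simp [ellF, AddMonoidAlgebra.coeff_single, Finsupp.sum_single_index]

lemma mulG_phi (f : ℝ → ℂ) (U : AMA) : mulG f (phiF U) = fun a => ellF f a U := by
  funext a
  have h1 : mulG f (phiF U) a = ∑ᶠ b : ℝ, f b * U.coeff (a - b) := rfl
  have hsub : (Function.support fun b => f b * U.coeff (a - b)) ⊆
      ↑(U.coeff.support.image (fun m => a - m)) := by
    intro b hb
    have : U.coeff (a - b) ≠ 0 := by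
      intro h; apply hb; simp [h]
    simp only [Finset.coe_image, Set.mem_image, Finset.mem_coe, Finsupp.mem_support_iff]
    exact ⟨a - b, this, by ring⟩
  rw [h1, finsum_eq_finset_sum_of_support_subset _ hsub]
  have h2 : (ellF f a U) = ∑ m ∈ U.coeff.support, f (a - m) * U.coeff m := rfl
  rw [h2, Finset.sum_image (by intro x _ y _ h; linarith)]
  exact Finset.sum_congr rfl fun m _ => by ring_nf

lemma mulG_phi_apply (f : ℝ → ℂ) (U : AMA) (a : ℝ) : mulG f (phiF U) a = ellF f a U := by
  rw [mulG_phi]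

lemma mulG_phi_single (f : ℝ → ℂ) (m : ℝ) (c : ℂ) :
    mulG f (phiF (AddMonoidAlgebra.single m c)) = fun a => f (a - m) * c := by
  funext a; rw [mulG_phi_apply, ellF_single]

lemma phi_one : phiF 1 = oneG := by
  funext a
  show (Finsupp.single (0:ℝ) (1:ℂ)) a = _
  simp [Finsupp.single_apply, oneG, eq_comm]

lemma monomial_phi (c : ℂ) (m : ℝ) : monomialG c m = phiF (AddMonoidAlgebra.single m c) := by
  funext a
  show _ = (Finsupp.single m c) a
  simp [Finsupp.single_apply, monomialG, eq_comm]

lemma ellF_smul (f : ℝ → ℂ) (a : ℝ) (c : ℂ) (U : AMA) :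
    ellF f a (c • U) = c * ellF f a U := by
  show ((c • U).coeff.sum fun m cm => f (a - m) * cm) = c * (U.coeff.sum fun m cm => f (a - m) * cm)
  rw [AddMonoidAlgebra.coeff_smul, Finsupp.sum_smul_index (by intro m; ring), Finsupp.mul_sum]
  exact Finsupp.sum_congr (by intro m _; ring)

lemma ellF_sum_left {ι : Type*} (s : Finset ι) (g : ι → ℝ → ℂ) (a : ℝ) (U : AMA) :
    ellF (fun x => ∑ i ∈ s, g i x) a U = ∑ i ∈ s, ellF (g i) a U := by
  show ∑ m ∈ U.coeff.support, (∑ i ∈ s, g i (a - m)) * U.coeff m = _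
  have h1 : ∀ m ∈ U.coeff.support, (∑ i ∈ s, g i (a - m)) * U.coeff m = ∑ i ∈ s, g i (a - m) * U.coeff m :=
    fun m _ => Finset.sum_mul _ _ _
  rw [Finset.sum_congr rfl h1, Finset.sum_comm]
  rfl

lemma ellF_const_mul_left (c : ℂ) (g : ℝ → ℂ) (a : ℝ) (U : AMA) :
    ellF (fun x => c * g x) a U = c * ellF g a U := by
  show ∑ m ∈ U.coeff.support, (c * g (a - m)) * U.coeff m = _
  rw [show (c * ellF g a U) = c * ∑ m ∈ U.coeff.support, g (a - m) * U.coeff m from rfl, Finset.mul_sum]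
  exact Finset.sum_congr rfl fun m _ => by ring

lemma ellF_mul_single (f : ℝ → ℂ) (a m : ℝ) (c : ℂ) (G : AMA) :
    ellF f a (G * AddMonoidAlgebra.single m c) = ellF f (a - m) G * c := by
  have h := DFunLike.congr_fun (AddMonoidAlgebra.addMonoidHom_ext
    (f := AddMonoidHom.mk' (fun U : AMA => ellF f a (U * AddMonoidAlgebra.single m c))
      (by intro x y; simp only [add_mul, map_add]))
    (g := AddMonoidHom.mk' (fun U : AMA => ellF f (a - m) U * c)
      (by intro x y; simp only [map_add, add_mul]))
    (by
      intro m' c'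
      show ellF f a (AddMonoidAlgebra.single m' c' * AddMonoidAlgebra.single m c)
          = ellF f (a - m) (AddMonoidAlgebra.single m' c') * c
      rw [AddMonoidAlgebra.single_mul_single, ellF_single, ellF_single]
      rw [show a - (m' + m) = a - m - m' by ring]; ring)) G
  exact h

lemma phi_mul (F G : AMA) : phiF (F * G) = mulG (phiF F) (phiF G) := by
  funext a
  rw [mulG_phi_apply]
  have h := DFunLike.congr_fun (AddMonoidAlgebra.addMonoidHom_ext
    (f := AddMonoidHom.mk' (fun U : AMA => (F * U).coeff a)
      (by intro x y; simp only [mul_add]; rfl))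
    (g := AddMonoidHom.mk' (fun U : AMA => ellF (phiF F) a U) (by intro x y; simp only [map_add]))
    (by
      intro m c
      show (F * AddMonoidAlgebra.single m c).coeff a = ellF (phiF F) a (AddMonoidAlgebra.single m c)
      rw [AddMonoidAlgebra.coeff_mul_single_apply, ellF_single]; rfl)) G
  exact h

lemma mulG_assoc_phi (f : ℝ → ℂ) (G H : AMA) :
    mulG (mulG f (phiF G)) (phiF H) = mulG f (phiF (G * H)) := by
  funext a
  rw [mulG_phi_apply, mulG_phi_apply]
  have h := DFunLike.congr_fun (AddMonoidAlgebra.addMonoidHom_ext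
    (f := AddMonoidHom.mk' (fun U : AMA => ellF (mulG f (phiF G)) a U)
      (by intro x y; simp only [map_add]))
    (g := AddMonoidHom.mk' (fun U : AMA => ellF f a (G * U))
      (by intro x y; simp only [mul_add, map_add]))
    (by
      intro m c
      show ellF (mulG f (phiF G)) a (AddMonoidAlgebra.single m c)
          = ellF f a (G * AddMonoidAlgebra.single m c)
      rw [ellF_single, ellF_mul_single, mulG_phi_apply])) H
  exact h

lemma phi_pow (F : AMA) (j : ℕ) : powG (phiF F) j = phiF (F ^ j) := by
  induction j with
  | zero => rw [pow_zero, phi_one]; rfl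
  | succ j ih =>
      show mulG (phiF F) (powG (phiF F) j) = _
      rw [ih, ← phi_mul, ← pow_succ']

-- Section B : Dop lemmas
lemma Dop_phi_single (dd : ℝ → ℂ) (ε : ℝ) (m : ℝ) (c : ℂ) :
    Dop dd ε (phiF (AddMonoidAlgebra.single m c))
      = phiF (AddMonoidAlgebra.single (m - ε) (dd m * c)) := by
  funext a
  show dd (a + ε) * (Finsupp.single m c) (a + ε)
      = (Finsupp.single (m - ε) (dd m * c)) a
  rw [Finsupp.single_apply, Finsupp.single_apply]
  by_cases h : m = a + ε
  · rw [if_pos h, if_pos (by linarith), h]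
  · rw [if_neg h, if_neg (by intro hh; apply h; linarith), mul_zero]

lemma iter_Dop_single (dd : ℝ → ℂ) (ε : ℝ) (m : ℝ) (c : ℂ) (κ : ℕ) :
    (Dop dd ε)^[κ] (phiF (AddMonoidAlgebra.single m c))
      = phiF (AddMonoidAlgebra.single (m - ε * κ) (dmuk dd ε m κ * c)) := by
  induction κ generalizing m c with
  | zero => simp [dmuk]
  | succ κ ih =>
      rw [Function.iterate_succ_apply, Dop_phi_single, ih]
      have e : dmuk dd ε m (κ+1) = dmuk dd ε (m - ε) κ * dd m := by
        rw [dmuk, dmuk, Finset.prod_range_succ']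
        congr 1
        · refine Finset.prod_congr rfl fun i _ => ?_
          congr 1; push_cast; ring
        · congr 1; push_cast; ring
      have h1 : m - ε - ε * κ = m - ε * ((κ:ℕ)+1 : ℕ) := by push_cast; ring
      have h2 : dmuk dd ε (m - ε) κ * (dd m * c) = dmuk dd ε m (κ+1) * c := by
        rw [e]; ring
      rw [h1, h2]

lemma iter_Dop_sum {ι : Type*} (dd : ℝ → ℂ) (ε : ℝ) (s : Finset ι) (f : ι → (ℝ → ℂ)) (κ : ℕ) :
    (Dop dd ε)^[κ] (fun a => ∑ j ∈ s, f j a) = fun a => ∑ j ∈ s, ((Dop dd ε)^[κ] (f j)) a := by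
  induction κ generalizing f with
  | zero => simp
  | succ κ ih =>
      rw [Function.iterate_succ_apply]
      rw [show Dop dd ε (fun a => ∑ j ∈ s, f j a) = fun a => ∑ j ∈ s, Dop dd ε (f j) a from ?_]
      · rw [ih]
        funext a
        exact Finset.sum_congr rfl fun j _ => by rw [← Function.iterate_succ_apply]
      · funext a
        show dd (a + ε) * ∑ j ∈ s, f j (a + ε) = _
        rw [Finset.mul_sum]; rfl

lemma phi_finset_sum {ι : Type*} (s : Finset ι) (F : ι → AMA) :
    phiF (∑ j ∈ s, F j) = fun a => ∑ j ∈ s, phiF (F j) a := by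
  funext a
  show (∑ j ∈ s, F j).coeff a = _
  rw [AddMonoidAlgebra.coeff_sum, Finsupp.finset_sum_apply]; rfl

lemma rSer_phi (c : ℕ → ℂ) (ν : ℕ → ℝ) (k : ℕ) :
    rSer c ν k = phiF (∑ j ∈ Finset.range (k+1), AddMonoidAlgebra.single (ν j) (c j)) := by
  rw [phi_finset_sum]
  funext a
  refine Finset.sum_congr rfl fun j _ => ?_
  show (if a = ν j then c j else 0) = (Finsupp.single (ν j) (c j)) a
  rw [Finsupp.single_apply]
  simp [eq_comm]

lemma iter_Dop_rSer (dd : ℝ → ℂ) (ε : ℝ) (c : ℕ → ℂ) (ν : ℕ → ℝ) (k : ℕ) (κ : ℕ) :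
    (Dop dd ε)^[κ] (rSer c ν k)
      = phiF (∑ j ∈ Finset.range (k+1),
          AddMonoidAlgebra.single (ν j - ε * κ) (dmuk dd ε (ν j) κ * c j)) := by
  rw [rSer_phi, phi_finset_sum, iter_Dop_sum, phi_finset_sum]
  funext a
  refine Finset.sum_congr rfl fun j _ => ?_
  rw [iter_Dop_single]

-- Section C : prodPow / fullSub / composition
section SecC

variable {n : ℕ}

def PowA (V : Fin (n+1) → AMA) (ρ : Fin (n+1) →₀ ℕ) : AMA := ∏ κ, (V κ)^(ρ κ)

lemma foldr_mulG_map (L : List AMA) :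
    (List.map phiF L).foldr mulG oneG = phiF L.prod := by
  induction L with
  | nil => simp [← phi_one]
  | cons x L ih => simp only [List.map_cons, List.foldr_cons, ih, List.prod_cons, phi_mul]

lemma prodPow_phi (V : Fin (n+1) → AMA) (ρ : Fin (n+1) →₀ ℕ) :
    prodPow (fun κ => phiF (V κ)) ρ = phiF (PowA V ρ) := by
  rw [prodPow, PowA]
  have h1 : (List.ofFn (fun κ : Fin (n+1) => powG (phiF (V κ)) (ρ κ)))
      = List.map phiF (List.ofFn (fun κ : Fin (n+1) => (V κ) ^ (ρ κ))) := by
    rw [List.map_ofFn]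
    congr 1
    funext κ
    simp only [Function.comp_apply, phi_pow]
  rw [h1, foldr_mulG_map, List.prod_ofFn]

lemma mulG_zero_left (g : ℝ → ℂ) : mulG 0 g = 0 := by
  funext a; simp [mulG]

def Tfin (S : Finset (Fin (n+1) →₀ ℕ)) (ρ : Fin (n+1) →₀ ℕ) : Finset (Fin (n+1) →₀ ℕ) :=
  (S.filter (fun π => ρ ≤ π)).image (fun π => π - ρ)

lemma mem_Tfin {S : Finset (Fin (n+1) →₀ ℕ)} {ρ σ : Fin (n+1) →₀ ℕ} (h : ρ + σ ∈ S) :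
    σ ∈ Tfin S ρ := by
  rw [Tfin, Finset.mem_image]
  exact ⟨ρ + σ, Finset.mem_filter.2 ⟨h, le_add_of_nonneg_right zero_le⟩,
    add_tsub_cancel_left ..⟩

lemma fullSub_eq (R : PolyG n) (hR : (Function.support R).Finite) (M : Fin (n+1) → AMA)
    (ρ : Fin (n+1) →₀ ℕ) :
    fullSub R (fun κ => phiF (M κ)) ρ = fun a => ∑ σ ∈ Tfin hR.toFinset ρ,
      binomProd ρ σ * (mulG (R (ρ+σ)) (phiF (PowA M σ)) a) := by
  funext a
  rw [fullSub]
  have h1 : ∀ σ : Fin (n+1) →₀ ℕ,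
      binomProd ρ σ * mulG (R (ρ + σ)) (prodPow (fun κ => phiF (M κ)) σ) a
      = binomProd ρ σ * (mulG (R (ρ+σ)) (phiF (PowA M σ)) a) := by
    intro σ; rw [prodPow_phi]
  rw [finsum_congr h1]
  refine finsum_eq_finset_sum_of_support_subset _ fun σ hσ => ?_
  have hS : R (ρ + σ) ≠ 0 := by
    intro h0
    apply hσ
    simp [h0, mulG_zero_left]
  exact mem_Tfin (by rw [Set.Finite.mem_toFinset]; exact hS)

lemma fullSub_support_subset (R : PolyG n) (hR : (Function.support R).Finite)
    (M : Fin (n+1) → AMA) :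
    Function.support (fullSub R (fun κ => phiF (M κ)))
      ⊆ ↑(hR.toFinset.biUnion fun π => Finset.Iic π) := by
  intro ρ hρ
  rw [Function.mem_support] at hρ
  have : ∃ a, fullSub R (fun κ => phiF (M κ)) ρ a ≠ 0 := by
    by_contra h
    push_neg at h
    exact hρ (funext h)
  obtain ⟨a, ha⟩ := this
  rw [fullSub_eq R hR M ρ] at ha
  obtain ⟨σ, hσmem, hσ⟩ := Finset.exists_ne_zero_of_sum_ne_zero ha
  have hS : R (ρ + σ) ≠ 0 := by
    intro h0; apply hσ; simp [h0, mulG_zero_left]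
  simp only [Finset.coe_biUnion, Set.mem_iUnion, Finset.mem_coe, Finset.mem_Iic]
  exact ⟨ρ + σ, by rw [Set.Finite.mem_toFinset]; exact hS,
    le_add_of_nonneg_right zero_le⟩

lemma multiBinom {A : Type*} [CommSemiring A] (x y : Fin (n+1) → A) (π : Fin (n+1) →₀ ℕ) :
    ∏ κ, (x κ + y κ)^(π κ) = ∑ σ ∈ Finset.Iic π,
      (∏ κ, ((π κ).choose (σ κ) : A)) * ((∏ κ, x κ ^ σ κ) * ∏ κ, y κ ^ (π κ - σ κ)) := by
  have h1 : ∀ κ : Fin (n+1), (x κ + y κ)^(π κ)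
      = ∑ j ∈ Finset.range (π κ + 1), x κ ^ j * y κ ^ (π κ - j) * ((π κ).choose j : A) :=
    fun κ => add_pow _ _ _
  rw [Finset.prod_congr rfl fun κ _ => h1 κ, Finset.prod_univ_sum]
  refine Finset.sum_nbij' (fun t => Finsupp.equivFunOnFinite.symm t) (fun σ => (σ : Fin (n+1) → ℕ))
    ?_ ?_ ?_ ?_ ?_
  · intro t ht
    rw [Finset.mem_Iic, Finsupp.le_def]
    intro κ
    have := (Fintype.mem_piFinset.1 ht) κ
    rw [Finset.mem_range] at this
    simpa using Nat.lt_succ_iff.1 this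
  · intro σ hσ
    rw [Fintype.mem_piFinset]
    intro κ
    rw [Finset.mem_range, Nat.lt_succ_iff]
    exact (Finset.mem_Iic.1 hσ) κ
  · intro t _; funext κ; simp
  · intro σ _; exact Finsupp.equivFunOnFinite.symm_apply_apply σ
  · intro t _
    rw [Finset.prod_mul_distrib, Finset.prod_mul_distrib]
    have e : ∀ κ : Fin (n+1), (Finsupp.equivFunOnFinite.symm t) κ = t κ := fun κ => rfl
    simp only [e]
    ring

lemma mulG_phi_finset_sum_right {ι : Type*} (f : ℝ → ℂ) (s : Finset ι) (U : ι → AMA) (a : ℝ) :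
    mulG f (phiF (∑ i ∈ s, U i)) a = ∑ i ∈ s, mulG f (phiF (U i)) a := by
  rw [mulG_phi_apply, map_sum]
  exact Finset.sum_congr rfl fun i _ => (mulG_phi_apply f (U i) a).symm

lemma mulG_phi_natCast_mul (f : ℝ → ℂ) (N : ℕ) (U : AMA) (a : ℝ) :
    mulG f (phiF ((N : AMA) * U)) a = (N : ℂ) * mulG f (phiF U) a := by
  have h1 : phiF ((N : AMA) * U) = phiF ((N : ℂ) • U) := by
    funext x
    show ((N : AMA) * U).coeff x = ((N : ℂ) • U).coeff x
    rw [AddMonoidAlgebra.natCast_def, AddMonoidAlgebra.coeff_single_zero_mul, AddMonoidAlgebra.coeff_smul_apply]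
    rfl
  rw [h1, mulG_phi_apply, ellF_smul, mulG_phi_apply]

lemma evalP_fullSub (R : PolyG n) (hR : (Function.support R).Finite) (M V : Fin (n+1) → AMA) :
    evalP (fullSub R (fun κ => phiF (M κ))) (fun κ => phiF (V κ))
      = evalP R (fun κ => phiF (M κ + V κ)) := by
  classical
  funext a
  set S : Finset (Fin (n+1) →₀ ℕ) := hR.toFinset with hS
  set S' : Finset (Fin (n+1) →₀ ℕ) := S.biUnion fun π => Finset.Iic π with hS'
  -- LHS as a double sum
  have hL : evalP (fullSub R (fun κ => phiF (M κ))) (fun κ => phiF (V κ)) a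
      = ∑ ρ ∈ S', ∑ σ ∈ Tfin S ρ,
          binomProd ρ σ * mulG (R (ρ+σ)) (phiF (PowA M σ * PowA V ρ)) a := by
    rw [evalP]
    have h1 : ∀ ρ : Fin (n+1) →₀ ℕ,
        mulG (fullSub R (fun κ => phiF (M κ)) ρ) (prodPow (fun κ => phiF (V κ)) ρ) a
        = ∑ σ ∈ Tfin S ρ, binomProd ρ σ * mulG (R (ρ+σ)) (phiF (PowA M σ * PowA V ρ)) a := by
      intro ρ
      rw [prodPow_phi, fullSub_eq R hR M ρ, mulG_phi_apply, ellF_sum_left]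
      refine Finset.sum_congr rfl fun σ _ => ?_
      rw [ellF_const_mul_left]
      congr 1
      rw [← mulG_phi_apply, mulG_assoc_phi]
    rw [finsum_congr h1]
    refine finsum_eq_finset_sum_of_support_subset _ fun ρ hρ => ?_
    rw [Function.mem_support] at hρ
    obtain ⟨σ, hσmem, hσ⟩ := Finset.exists_ne_zero_of_sum_ne_zero hρ
    have hRne : R (ρ + σ) ≠ 0 := by
      intro h0; apply hσ; simp [h0, mulG_zero_left]
    simp only [hS', Finset.coe_biUnion, Set.mem_iUnion, Finset.mem_coe, Finset.mem_Iic]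
    exact ⟨ρ + σ, by rw [hS, Set.Finite.mem_toFinset]; exact hRne,
      le_add_of_nonneg_right zero_le⟩
  -- RHS as a double sum
  have hR2 : evalP R (fun κ => phiF (M κ + V κ)) a
      = ∑ π ∈ S, ∑ σ ∈ Finset.Iic π,
          (∏ κ, (((π κ).choose (σ κ) : ℕ) : ℂ)) *
            mulG (R π) (phiF (PowA M σ * PowA V (π - σ))) a := by
    rw [evalP]
    have h1 : ∀ π : Fin (n+1) →₀ ℕ,
        mulG (R π) (prodPow (fun κ => phiF (M κ) + phiF (V κ)) π) a
        = ∑ σ ∈ Finset.Iic π, (∏ κ, (((π κ).choose (σ κ) : ℕ) : ℂ)) *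
            mulG (R π) (phiF (PowA M σ * PowA V (π - σ))) a := by
      intro π
      have hMV : (fun κ => phiF (M κ) + phiF (V κ)) = fun κ => phiF (M κ + V κ) := by
        funext κ x
        show phiF (M κ) x + phiF (V κ) x = (M κ + V κ).coeff x
        rw [AddMonoidAlgebra.coeff_add, Finsupp.add_apply]; rfl
      rw [hMV, prodPow_phi]
      have hbin : PowA (fun κ => M κ + V κ) π
          = ∑ σ ∈ Finset.Iic π, ((∏ κ, ((π κ).choose (σ κ) : ℕ) : ℕ) : AMA) *
              (PowA M σ * PowA V (π - σ)) := by
        rw [PowA, multiBinom M V π]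
        refine Finset.sum_congr rfl fun σ _ => ?_
        rw [Nat.cast_prod]
        simp only [PowA, Finsupp.tsub_apply]
      rw [hbin, mulG_phi_finset_sum_right]
      refine Finset.sum_congr rfl fun σ _ => ?_
      rw [mulG_phi_natCast_mul, Nat.cast_prod]
    have h2 : ∀ π : Fin (n+1) →₀ ℕ,
        mulG (R π) (prodPow (fun κ => phiF (M κ + V κ)) π) a
        = mulG (R π) (prodPow (fun κ => phiF (M κ) + phiF (V κ)) π) a := by
      intro π
      have : (fun κ => phiF (M κ + V κ)) = (fun κ => phiF (M κ) + phiF (V κ)) := by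
        funext κ x
        show (M κ + V κ).coeff x = phiF (M κ) x + phiF (V κ) x
        rw [AddMonoidAlgebra.coeff_add, Finsupp.add_apply]; rfl
      rw [this]
    rw [finsum_congr fun π => (h2 π).trans (h1 π)]
    refine finsum_eq_finset_sum_of_support_subset _ fun π hπ => ?_
    rw [Function.mem_support] at hπ
    have hRne : R π ≠ 0 := by
      intro h0; apply hπ
      refine Finset.sum_eq_zero fun σ _ => ?_
      simp [h0, mulG_zero_left]
    simp only [hS, Finset.mem_coe, Set.Finite.mem_toFinset]; exact hRne
  rw [hL, hR2, Finset.sum_sigma', Finset.sum_sigma']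
  refine Finset.sum_nbij' (fun p => ⟨p.1 + p.2, p.2⟩) (fun p => ⟨p.1 - p.2, p.2⟩) ?_ ?_ ?_ ?_ ?_
  · rintro ⟨ρ, σ⟩ hp
    rw [Finset.mem_sigma] at hp ⊢
    dsimp only at hp ⊢
    obtain ⟨h1, h2⟩ := hp
    rw [Tfin, Finset.mem_image] at h2
    obtain ⟨π, hπ, hπe⟩ := h2
    rw [Finset.mem_filter] at hπ
    constructor
    · have : ρ + σ = π := by rw [← hπe, add_tsub_cancel_of_le hπ.2]
      rw [this]; exact hπ.1
    · exact Finset.mem_Iic.2 (le_add_of_nonneg_left zero_le)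
  · rintro ⟨π, σ⟩ hp
    rw [Finset.mem_sigma] at hp ⊢
    dsimp only at hp ⊢
    obtain ⟨h1, h2⟩ := hp
    rw [Finset.mem_Iic] at h2
    constructor
    · simp only [hS', Finset.mem_biUnion]
      exact ⟨π, h1, Finset.mem_Iic.2 tsub_le_self⟩
    · have : (π - σ) + σ = π := tsub_add_cancel_of_le h2
      exact mem_Tfin (by rw [this]; exact h1)
  · rintro ⟨ρ, σ⟩ _
    dsimp only
    rw [add_tsub_cancel_right]
  · rintro ⟨π, σ⟩ hp
    rw [Finset.mem_sigma] at hp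
    dsimp only at hp ⊢
    have h2 := Finset.mem_Iic.1 hp.2
    rw [tsub_add_cancel_of_le h2]
  · rintro ⟨ρ, σ⟩ hp
    dsimp only
    have hsub : ρ + σ - σ = ρ := add_tsub_cancel_right ..
    rw [hsub]
    congr 1
    rw [binomProd]
    refine Finset.prod_congr rfl fun κ _ => ?_
    congr 1
    have h1 : σ κ ≤ (ρ + σ) κ := by
      rw [Finsupp.add_apply]; exact Nat.le_add_left _ _
    have h2 : (ρ + σ) κ - σ κ = ρ κ := by
      rw [Finsupp.add_apply]; omega
    rw [← Nat.choose_symm h1, h2]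

lemma mulG_oneG_right (f : ℝ → ℂ) : mulG f oneG = f := by
  rw [← phi_one, show (1 : AMA) = AddMonoidAlgebra.single 0 1 from AddMonoidAlgebra.one_def,
    mulG_phi_single]
  funext a; simp

lemma omega_shift {f : ℝ → ℂ} (hf : OmegaSupp f) (m : ℝ) (c : ℂ) :
    OmegaSupp (fun a => f (a - m) * c) := by
  intro B
  have h1 : {a : ℝ | f (a - m) * c ≠ 0 ∧ a ≤ B} ⊆ (fun x => x + m) '' {x : ℝ | f x ≠ 0 ∧ x ≤ B - m} := by
    rintro a ⟨h1, h2⟩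
    exact ⟨a - m, ⟨fun h0 => h1 (by rw [h0, zero_mul]), by linarith⟩, by ring⟩
  exact Set.Finite.subset (Set.Finite.image _ (hf (B - m))) h1

lemma omega_finset_sum {ι : Type*} {s : Finset ι} {f : ι → (ℝ → ℂ)}
    (hf : ∀ i ∈ s, OmegaSupp (f i)) : OmegaSupp (fun a => ∑ i ∈ s, f i a) := by
  intro B
  have h1 : {a : ℝ | (∑ i ∈ s, f i a) ≠ 0 ∧ a ≤ B} ⊆ ⋃ i ∈ s, {a : ℝ | f i a ≠ 0 ∧ a ≤ B} := by
    rintro a ⟨h1, h2⟩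
    have : ∃ i ∈ s, f i a ≠ 0 := by
      by_contra h
      push_neg at h
      exact h1 (Finset.sum_eq_zero h)
    obtain ⟨i, hi, hia⟩ := this
    exact Set.mem_biUnion hi ⟨hia, h2⟩
  exact Set.Finite.subset (Set.Finite.biUnion s.finite_toSet fun i hi => hf i hi B) h1

lemma omega_const_mul {f : ℝ → ℂ} (hf : OmegaSupp f) (c : ℂ) :
    OmegaSupp (fun a => c * f a) := by
  intro B
  refine Set.Finite.subset (hf B) ?_
  rintro a ⟨h1, h2⟩
  refine ⟨fun h0 => h1 ?_, h2⟩
  show c * f a = 0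
  rw [h0, mul_zero]

lemma omega_zero : OmegaSupp 0 := by
  intro B
  convert Set.finite_empty using 1
  ext a; simp

lemma omega_mulG_phi {f : ℝ → ℂ} (hf : OmegaSupp f) (U : AMA) :
    OmegaSupp (mulG f (phiF U)) := by
  have h1 : mulG f (phiF U) = fun a => ∑ m ∈ U.coeff.support, f (a - m) * U.coeff m := by
    funext a; rw [mulG_phi_apply]; rfl
  rw [h1]
  exact omega_finset_sum fun m _ => omega_shift hf m (U.coeff m)

lemma omega_isLeast {f : ℝ → ℂ} (hf : OmegaSupp f) (h0 : f ≠ 0) :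
    IsLeast (Function.support f) (sInf (Function.support f)) := by
  obtain ⟨s, hs⟩ : ∃ s, f s ≠ 0 := Function.ne_iff.1 h0
  have hA : {a : ℝ | f a ≠ 0 ∧ a ≤ s}.Finite := hf s
  have hAne : hA.toFinset.Nonempty := ⟨s, by rw [Set.Finite.mem_toFinset]; exact ⟨hs, le_refl s⟩⟩
  set m := hA.toFinset.min' hAne with hm
  have hmA : m ∈ {a : ℝ | f a ≠ 0 ∧ a ≤ s} := by
    rw [← Set.Finite.mem_toFinset hA]; exact hA.toFinset.min'_mem hAne
  have hleast : IsLeast (Function.support f) m := by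
    constructor
    · exact hmA.1
    · intro a ha
      rw [Function.mem_support] at ha
      by_cases hle : a ≤ s
      · exact hA.toFinset.min'_le a (by rw [Set.Finite.mem_toFinset]; exact ⟨ha, hle⟩)
      · push_neg at hle
        have := hmA.2
        linarith
  rw [hleast.csInf_eq]
  exact hleast

lemma fullSub_row_omega (R : PolyG n) (hR : (Function.support R).Finite)
    (hom : ∀ ρ, OmegaSupp (R ρ)) (M : Fin (n+1) → AMA) (ρ : Fin (n+1) →₀ ℕ) :
    OmegaSupp (fullSub R (fun κ => phiF (M κ)) ρ) := by
  rw [fullSub_eq R hR M ρ]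
  exact omega_finset_sum fun σ _ => omega_const_mul (omega_mulG_phi (hom (ρ + σ)) _) _

lemma totDeg_add (ρ σ : Fin (n+1) →₀ ℕ) : totDeg (ρ + σ) = totDeg ρ + totDeg σ := by
  rw [totDeg, totDeg, totDeg, ← Finset.sum_add_distrib]
  exact Finset.sum_congr rfl fun κ _ => Finsupp.add_apply ..

lemma wt_add (ρ σ : Fin (n+1) →₀ ℕ) : wt (ρ + σ) = wt ρ + wt σ := by
  rw [wt, wt, wt, ← Finset.sum_add_distrib]
  refine Finset.sum_congr rfl fun κ _ => ?_
  rw [Finsupp.add_apply]; ring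

lemma totDeg_eq_zero {ρ : Fin (n+1) →₀ ℕ} (h : totDeg ρ = 0) : ρ = 0 := by
  rw [totDeg, Finset.sum_eq_zero_iff] at h
  ext κ
  exact h κ (Finset.mem_univ κ)

lemma totDeg_zero : totDeg (0 : Fin (n+1) →₀ ℕ) = 0 := by simp [totDeg]

lemma wt_zero : wt (0 : Fin (n+1) →₀ ℕ) = 0 := by simp [wt]

lemma cloud_isLeast (ε : ℝ) (R : PolyG n) (hfin : (Function.support R).Finite)
    (hom : ∀ ρ, OmegaSupp (R ρ)) (hne : R ≠ 0) (μ : ℝ) :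
    IsLeast ((fun p : ℝ × ℕ => p.1 + μ * p.2) '' cloud ε R) (lineMin ε μ R) := by
  classical
  set D := hfin.toFinset with hD
  have hDne : D.Nonempty := by
    obtain ⟨ρ, hρ⟩ := Function.ne_iff.1 hne
    exact ⟨ρ, by rw [hD, Set.Finite.mem_toFinset]; exact hρ⟩
  set vals : (Fin (n+1) →₀ ℕ) → ℝ :=
    fun ρ => sInf (Function.support (R ρ)) - ε * wt ρ + μ * totDeg ρ with hvals
  have hmem_least : ∀ ρ ∈ D, IsLeast (Function.support (R ρ)) (sInf (Function.support (R ρ))) := by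
    intro ρ hρ
    exact omega_isLeast (hom ρ) (by rwa [hD, Set.Finite.mem_toFinset] at hρ)
  set m := (D.image vals).min' (hDne.image vals) with hm
  obtain ⟨ρ0, hρ0D, hρ0⟩ := Finset.mem_image.1 ((D.image vals).min'_mem (hDne.image vals))
  have hlb : ∀ q ∈ (fun p : ℝ × ℕ => p.1 + μ * p.2) '' cloud ε R, m ≤ q := by
    rintro q ⟨p, ⟨ρ, hdeg, hner⟩, rfl⟩
    have hρD : ρ ∈ D := by
      rw [hD, Set.Finite.mem_toFinset]
      intro h0
      exact hner (by rw [h0]; rfl)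
    have hsupp : p.1 + ε * wt ρ ∈ Function.support (R ρ) := hner
    have h1 : sInf (Function.support (R ρ)) ≤ p.1 + ε * wt ρ := (hmem_least ρ hρD).2 hsupp
    have h2 : m ≤ vals ρ := (D.image vals).min'_le _ (Finset.mem_image_of_mem vals hρD)
    rw [hvals] at h2
    simp only at h2 ⊢
    rw [← hdeg]
    push_cast
    push_cast at h2
    linarith
  have hmem : m ∈ (fun p : ℝ × ℕ => p.1 + μ * p.2) '' cloud ε R := by
    refine ⟨(sInf (Function.support (R ρ0)) - ε * wt ρ0, totDeg ρ0), ⟨ρ0, rfl, ?_⟩, ?_⟩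
    · have : sInf (Function.support (R ρ0)) - ε * wt ρ0 + ε * wt ρ0
          = sInf (Function.support (R ρ0)) := by ring
      rw [this]
      exact (hmem_least ρ0 hρ0D).1
    · show sInf (Function.support (R ρ0)) - ε * ↑(wt ρ0) + μ * ↑(totDeg ρ0) = m
      rw [hm, ← hρ0]
  have hIs : IsLeast ((fun p : ℝ × ℕ => p.1 + μ * p.2) '' cloud ε R) m := ⟨hmem, hlb⟩
  rw [lineMin, hIs.csInf_eq]
  exact hIs

lemma lineMin_le (ε : ℝ) (R : PolyG n) (hfin : (Function.support R).Finite)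
    (hom : ∀ ρ, OmegaSupp (R ρ)) (hne : R ≠ 0) (μ : ℝ) {p : ℝ × ℕ} (hp : p ∈ cloud ε R) :
    lineMin ε μ R ≤ p.1 + μ * p.2 :=
  (cloud_isLeast ε R hfin hom hne μ).2 ⟨p, hp, rfl⟩

def Mvec (dd : ℝ → ℂ) (ε : ℝ) (c0 : ℂ) (ν0 : ℝ) : Fin (n+1) → AMA :=
  fun κ => AddMonoidAlgebra.single (ν0 - ε * κ) (dmuk dd ε ν0 κ * c0)

lemma subMon_eq (dd : ℝ → ℂ) (ε : ℝ) (R : PolyG n) (c0 : ℂ) (ν0 : ℝ) :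
    subMon dd ε R c0 ν0 = fullSub R (fun κ => phiF (Mvec dd ε c0 ν0 κ)) := by
  have hv : (fun κ : Fin (n+1) => (Dop dd ε)^[(κ:ℕ)] (monomialG c0 ν0))
      = fun κ => phiF (Mvec dd ε c0 ν0 κ) := by
    funext κ
    rw [monomial_phi, iter_Dop_single]
    rfl
  rw [subMon, hv]

lemma seqSub_fin (dd : ℝ → ℂ) (ε : ℝ) (P : PolyG n) (hfin : (Function.support P).Finite)
    (c : ℕ → ℂ) (ν : ℕ → ℝ) : ∀ i, (Function.support (seqSub dd ε P c ν i)).Finite := by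
  intro i
  induction i with
  | zero => exact hfin
  | succ i ih =>
      show (Function.support (subMon dd ε (seqSub dd ε P c ν i) (c i) (ν i))).Finite
      rw [subMon_eq]
      exact Set.Finite.subset (Finset.finite_toSet _)
        (fullSub_support_subset (seqSub dd ε P c ν i) ih (Mvec dd ε (c i) (ν i)))

lemma seqSub_omega (dd : ℝ → ℂ) (ε : ℝ) (P : PolyG n) (hfin : (Function.support P).Finite)
    (hom : ∀ ρ, OmegaSupp (P ρ)) (c : ℕ → ℂ) (ν : ℕ → ℝ) :
    ∀ i ρ, OmegaSupp (seqSub dd ε P c ν i ρ) := by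
  intro i
  induction i with
  | zero => exact hom
  | succ i ih =>
      intro ρ
      show OmegaSupp (subMon dd ε (seqSub dd ε P c ν i) (c i) (ν i) ρ)
      rw [subMon_eq]
      exact fullSub_row_omega _ (seqSub_fin dd ε P hfin c ν i) ih _ ρ

def Wv (dd : ℝ → ℂ) (ε : ℝ) (c : ℕ → ℂ) (ν : ℕ → ℝ) (k i : ℕ) (κ : Fin (n+1)) : AMA :=
  ∑ j ∈ Finset.Ico i (k+1), AddMonoidAlgebra.single (ν j - ε * κ) (dmuk dd ε (ν j) κ * c j)

lemma evalP_seqSub_eq (dd : ℝ → ℂ) (ε : ℝ) (P : PolyG n) (hfin : (Function.support P).Finite)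
    (c : ℕ → ℂ) (ν : ℕ → ℝ) (k : ℕ) :
    ∀ i, i ≤ k+1 → evalP (seqSub dd ε P c ν i) (fun κ => phiF (Wv dd ε c ν k i κ))
      = evalP P (fun κ => phiF (Wv dd ε c ν k 0 κ)) := by
  intro i
  induction i with
  | zero => intro _; rfl
  | succ i ih =>
      intro hik
      have hik' : i ≤ k + 1 := by omega
      rw [← ih hik']
      show evalP (subMon dd ε (seqSub dd ε P c ν i) (c i) (ν i)) _ = _
      have hw : (fun κ : Fin (n+1) => phiF (Mvec dd ε (c i) (ν i) κ + Wv dd ε c ν k (i+1) κ))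
          = fun κ => phiF (Wv dd ε c ν k i κ) := by
        funext κ
        congr 1
        simp only [Mvec, Wv]
        rw [Finset.sum_eq_sum_Ico_succ_bot (by omega : i < k+1)]
      rw [subMon_eq, evalP_fullSub _ (seqSub_fin dd ε P hfin c ν i), hw]

lemma evalP_phi_zero_vec (R : PolyG n) : evalP R (fun _ => phiF (0 : AMA)) = R 0 := by
  funext a
  rw [evalP]
  have hz : ∀ ρ : Fin (n+1) →₀ ℕ, ρ ≠ 0 →
      mulG (R ρ) (prodPow (fun _ => phiF (0:AMA)) ρ) a = 0 := by
    intro ρ hρ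
    rw [prodPow_phi]
    have h1 : PowA (fun _ : Fin (n+1) => (0:AMA)) ρ = 0 := by
      rw [PowA]
      have : ∃ κ : Fin (n+1), ρ κ ≠ 0 := by
        by_contra h
        push_neg at h
        exact hρ (Finsupp.ext h)
      obtain ⟨κ, hκ⟩ := this
      exact Finset.prod_eq_zero (Finset.mem_univ κ) (zero_pow hκ)
    rw [h1, mulG_phi_apply, map_zero]
  rw [finsum_eq_single _ 0 hz, prodPow_phi]
  have h1 : PowA (fun _ : Fin (n+1) => (0:AMA)) 0 = 1 := by
    rw [PowA]
    refine Finset.prod_eq_one fun κ _ => ?_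
    rw [Finsupp.coe_zero, Pi.zero_apply, pow_zero]
  rw [h1, phi_one, mulG_oneG_right]

lemma Q0_eval (dd : ℝ → ℂ) (ε : ℝ) (P : PolyG n) (hfin : (Function.support P).Finite)
    (c : ℕ → ℂ) (ν : ℕ → ℝ) (k : ℕ) :
    seqSub dd ε P c ν (k+1) 0 = evalP P (fun κ : Fin (n+1) => (Dop dd ε)^[(κ:ℕ)] (rSer c ν k)) := by
  have h1 : (fun κ : Fin (n+1) => (Dop dd ε)^[(κ:ℕ)] (rSer c ν k))
      = fun κ => phiF (Wv dd ε c ν k 0 κ) := by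
    funext κ
    rw [iter_Dop_rSer]
    congr 1
    simp only [Wv]
    rw [Finset.range_eq_Ico]
  rw [h1, ← evalP_seqSub_eq dd ε P hfin c ν k (k+1) (le_refl _)]
  have h2 : (fun κ : Fin (n+1) => phiF (Wv dd ε c ν k (k+1) κ)) = fun _ => phiF (0:AMA) := by
    funext κ
    simp [Wv]
  rw [h2, evalP_phi_zero_vec]

lemma phiAt_eq_sum (dd : ℝ → ℂ) (ε : ℝ) (R : PolyG n) (hfin : (Function.support R).Finite)
    (μ : ℝ) (C : ℂ) :
    phiAt dd ε R μ C = ∑ ρ ∈ hfin.toFinset,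
      R ρ (lineMin ε μ R - μ * totDeg ρ + ε * wt ρ) *
        ((∏ κ : Fin (n+1), dmuk dd ε μ (κ:ℕ) ^ ρ κ) * C ^ totDeg ρ) := by
  classical
  set D := hfin.toFinset with hD
  set L := lineMin ε μ R with hL
  have hpsi : ∀ h : ℕ, psiAt dd ε R (L - μ * h, h) μ
      = ∑ ρ ∈ D, if totDeg ρ = h then
          R ρ (L - μ * h + ε * wt ρ) * ∏ κ : Fin (n+1), dmuk dd ε μ (κ:ℕ) ^ ρ κ else 0 := by
    intro h
    rw [psiAt]
    refine finsum_eq_finset_sum_of_support_subset _ fun ρ hρ => ?_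
    rw [Function.mem_support] at hρ
    by_cases hc : totDeg ρ = h
    · rw [if_pos hc] at hρ
      have : R ρ ≠ 0 := by
        intro h0; apply hρ; rw [h0]; simp
      rw [hD, Finset.mem_coe, Set.Finite.mem_toFinset]; exact this
    · rw [if_neg hc] at hρ; exact absurd rfl hρ
  rw [phiAt, finsum_congr fun h => by rw [hpsi h]]
  rw [finsum_eq_finset_sum_of_support_subset _ (s := D.image totDeg) ?_]
  · have hsum : ∀ h ∈ D.image totDeg,
        (∑ ρ ∈ D, if totDeg ρ = h then
          R ρ (L - μ * h + ε * wt ρ) * ∏ κ : Fin (n+1), dmuk dd ε μ (κ:ℕ) ^ ρ κ else 0) * C ^ h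
        = ∑ ρ ∈ D, if totDeg ρ = h then
            R ρ (L - μ * h + ε * wt ρ) * ((∏ κ : Fin (n+1), dmuk dd ε μ (κ:ℕ) ^ ρ κ) * C ^ h) else 0 := by
      intro h _
      rw [Finset.sum_mul]
      refine Finset.sum_congr rfl fun ρ _ => ?_
      rw [ite_mul, zero_mul, mul_assoc]
    rw [Finset.sum_congr rfl hsum, Finset.sum_comm]
    refine Finset.sum_congr rfl fun ρ hρ => ?_
    have hmem : totDeg ρ ∈ D.image totDeg := Finset.mem_image_of_mem totDeg hρ
    rw [Finset.sum_ite_eq (D.image totDeg) (totDeg ρ), if_pos hmem]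
  · intro h hh
    rw [Function.mem_support] at hh
    have : ∃ ρ ∈ D, (if totDeg ρ = h then
        R ρ (L - μ * h + ε * wt ρ) * ∏ κ : Fin (n+1), dmuk dd ε μ (κ:ℕ) ^ ρ κ else 0) ≠ 0 := by
      by_contra hcon
      push_neg at hcon
      apply hh
      rw [Finset.sum_eq_zero hcon, zero_mul]
    obtain ⟨ρ, hρD, hρ⟩ := this
    have hc : totDeg ρ = h := by
      by_contra hc
      rw [if_neg hc] at hρ; exact hρ rfl
    rw [Finset.coe_image]
    exact ⟨ρ, hρD, hc⟩

lemma PowA_single (m : Fin (n+1) → ℝ) (b : Fin (n+1) → ℂ) (σ : Fin (n+1) →₀ ℕ) :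
    PowA (fun κ => AddMonoidAlgebra.single (m κ) (b κ)) σ
      = AddMonoidAlgebra.single (∑ κ, (σ κ : ℝ) * m κ) (∏ κ, b κ ^ σ κ) := by
  rw [PowA]
  have h1 : ∀ κ : Fin (n+1), (AddMonoidAlgebra.single (m κ) (b κ))^(σ κ)
      = AddMonoidAlgebra.single ((σ κ : ℝ) * m κ) (b κ ^ σ κ) := by
    intro κ
    rw [AddMonoidAlgebra.single_pow]
    congr 1
    rw [nsmul_eq_mul]
  rw [Finset.prod_congr rfl fun κ _ => h1 κ, AddMonoidAlgebra.prod_single]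

lemma Qrow (dd : ℝ → ℂ) (ε : ℝ) (P' : PolyG n) (hfin : (Function.support P').Finite)
    (ck : ℂ) (νk : ℝ) (ρ : Fin (n+1) →₀ ℕ) (a : ℝ) :
    fullSub P' (fun κ => phiF (Mvec dd ε ck νk κ)) ρ a
      = ∑ σ ∈ Tfin hfin.toFinset ρ, binomProd ρ σ *
          (P' (ρ+σ) (a - ((totDeg σ : ℝ) * νk - ε * wt σ)) *
            ((∏ κ : Fin (n+1), dmuk dd ε νk (κ:ℕ) ^ σ κ) * ck ^ totDeg σ)) := by
  rw [fullSub_eq P' hfin _ ρ]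
  refine Finset.sum_congr rfl fun σ _ => ?_
  congr 1
  have hPow : PowA (Mvec dd ε ck νk) σ
      = AddMonoidAlgebra.single ((totDeg σ : ℝ) * νk - ε * wt σ)
          ((∏ κ : Fin (n+1), dmuk dd ε νk (κ:ℕ) ^ σ κ) * ck ^ totDeg σ) := by
    rw [show Mvec dd ε ck νk = fun κ : Fin (n+1) =>
        AddMonoidAlgebra.single (νk - ε * (κ:ℕ)) (dmuk dd ε νk (κ:ℕ) * ck) from rfl]
    rw [PowA_single]
    congr 1
    · have h1 : ∀ κ : Fin (n+1), (σ κ : ℝ) * (νk - ε * (κ:ℕ))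
          = νk * (σ κ:ℝ) - ε * (((κ:ℕ) * σ κ : ℕ):ℝ) := by
        intro κ; push_cast; ring
      rw [Finset.sum_congr rfl fun κ _ => h1 κ, Finset.sum_sub_distrib,
        ← Finset.mul_sum, ← Finset.mul_sum, totDeg, wt]
      push_cast
      ring
    · have h2 : ∀ κ : Fin (n+1), (dmuk dd ε νk (κ:ℕ) * ck) ^ σ κ
          = dmuk dd ε νk (κ:ℕ) ^ σ κ * ck ^ σ κ := fun κ => mul_pow _ _ _
      rw [Finset.prod_congr rfl fun κ _ => h2 κ, Finset.prod_mul_distrib,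
        Finset.prod_pow_eq_pow_sum, totDeg]
  rw [hPow, mulG_phi_single]

lemma polygon_main (dd : ℝ → ℂ) (ε : ℝ) (P' : PolyG n)
    (hfin : (Function.support P').Finite) (hom : ∀ ρ, OmegaSupp (P' ρ)) (hne : P' ≠ 0)
    (ck : ℂ) (νk : ℝ) (hPhi : phiAt dd ε P' νk ck = 0)
    (Q : PolyG n) (hQdef : Q = fullSub P' (fun κ => phiF (Mvec dd ε ck νk κ)))
    (hQ0 : Q 0 ≠ 0) :
    ∃ μ : ℝ, νk < μ ∧ ∃ p q : ℝ × ℕ, p ∈ Eelem ε μ Q ∧ q ∈ Eelem ε μ Q ∧ p ≠ q := by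
  classical
  set S := hfin.toFinset with hS
  set L := lineMin ε νk P' with hL
  have hQfin : (Function.support Q).Finite := by
    rw [hQdef]
    exact Set.Finite.subset (Finset.finite_toSet _) (fullSub_support_subset P' hfin _)
  have hQom : ∀ ρ, OmegaSupp (Q ρ) := by
    intro ρ; rw [hQdef]; exact fullSub_row_omega P' hfin hom _ ρ
  have hQrowf : ∀ ρ a, Q ρ a = ∑ σ ∈ Tfin S ρ, binomProd ρ σ *
      (P' (ρ+σ) (a - ((totDeg σ : ℝ) * νk - ε * wt σ)) *
        ((∏ κ : Fin (n+1), dmuk dd ε νk (κ:ℕ) ^ σ κ) * ck ^ totDeg σ)) := by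
    intro ρ a; rw [hQdef]; exact Qrow dd ε P' hfin ck νk ρ a
  have hPleast := cloud_isLeast ε P' hfin hom hne νk
  rw [← hL] at hPleast
  obtain ⟨pE, hpEc, hpEv⟩ := hPleast.1
  have hEelne : (Prod.snd '' Eelem ε νk P').Nonempty := ⟨pE.2, pE, ⟨hpEc, hpEv⟩, rfl⟩
  have hbdd : BddAbove (Prod.snd '' Eelem ε νk P') := by
    refine (Set.Finite.subset (Finset.finite_toSet (S.image totDeg)) ?_).bddAbove
    rintro h ⟨p, ⟨⟨ρ', hdeg', hne'⟩, _⟩, rfl⟩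
    have hρ'S : ρ' ∈ S := by
      rw [hS, Set.Finite.mem_toFinset]; intro h0; exact hne' (by rw [h0]; rfl)
    rw [Finset.coe_image]; exact ⟨ρ', hρ'S, hdeg'⟩
  set hT := sSup (Prod.snd '' Eelem ε νk P') with hhT
  have hTmem := Nat.sSup_mem hEelne hbdd
  obtain ⟨pT, hpTE, hpT2x⟩ := hTmem
  have hpT2 : pT.2 = hT := by rw [hpT2x, ← hhT]
  have hub : ∀ p ∈ Eelem ε νk P', p.2 ≤ hT := fun p hp => le_csSup hbdd ⟨p, hp, rfl⟩
  have hEmem : ∀ p : ℝ × ℕ, p ∈ cloud ε P' → p.1 + νk * p.2 = L → p ∈ Eelem ε νk P' :=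
    fun p hc hv => ⟨hc, hv⟩
  have hpTval : pT.1 + νk * pT.2 = L := hpTE.2
  -- hT ≥ 1
  have hT1 : 1 ≤ hT := by
    by_contra hcon
    push_neg at hcon
    have hT0 : hT = 0 := by omega
    have hpT20 : pT.2 = 0 := by rw [hpT2]; exact hT0
    have hpT1 : pT.1 = L := by
      rw [hpT20] at hpTval
      push_cast at hpTval
      linarith
    obtain ⟨ρ', hdeg', hne'⟩ := hpTE.1
    have hρ'0 : ρ' = 0 := totDeg_eq_zero (by rw [hdeg', hpT20])
    have hP0L : P' 0 L ≠ 0 := by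
      rw [hρ'0] at hne'
      have harg : pT.1 + ε * (wt (0 : Fin (n+1) →₀ ℕ) : ℝ) = L := by
        rw [wt_zero, hpT1]; push_cast; ring
      rwa [harg] at hne'
    have h0S : (0 : Fin (n+1) →₀ ℕ) ∈ S := by
      rw [hS, Set.Finite.mem_toFinset]; intro h0; exact hP0L (by rw [h0]; rfl)
    have hsum : phiAt dd ε P' νk ck = P' 0 L := by
      rw [phiAt_eq_sum dd ε P' hfin νk ck]
      rw [Finset.sum_eq_single_of_mem 0 h0S ?_]
      · rw [totDeg_zero, wt_zero]
        push_cast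
        simp only [mul_zero, sub_zero, add_zero, pow_zero, mul_one, Finsupp.coe_zero,
          Pi.zero_apply, Finset.prod_const_one]
        rfl
      · intro ρ _ hρne
        by_contra hterm
        have hRne : P' ρ (L - νk * totDeg ρ + ε * wt ρ) ≠ 0 := by
          intro h0
          apply hterm
          rw [← hL, h0, zero_mul]
        have hcl : ((L - νk * totDeg ρ, totDeg ρ) : ℝ × ℕ) ∈ cloud ε P' := ⟨ρ, rfl, hRne⟩
        have hEl := hEmem _ hcl (by push_cast; ring)
        have hle := hub _ hEl
        simp only at hle
        exact hρne (totDeg_eq_zero (by omega))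
    exact hP0L (hsum ▸ hPhi)
  -- zero-row formula
  have hT0fin : Tfin S 0 = S := by
    ext τ
    rw [Tfin, Finset.mem_image]
    constructor
    · rintro ⟨π, hπ, rfl⟩
      rw [Finset.mem_filter] at hπ
      rw [tsub_zero]; exact hπ.1
    · intro hτ
      exact ⟨τ, Finset.mem_filter.2 ⟨hτ, zero_le⟩, tsub_zero τ⟩
  have hbin0 : ∀ σ : Fin (n+1) →₀ ℕ, binomProd 0 σ = 1 := by
    intro σ
    rw [binomProd]
    refine Finset.prod_eq_one fun κ _ => ?_
    rw [zero_add]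
    simp
  have hQ0val : ∀ a, Q 0 a = ∑ σ ∈ S, P' σ (a - ((totDeg σ : ℝ) * νk - ε * wt σ)) *
      ((∏ κ : Fin (n+1), dmuk dd ε νk (κ:ℕ) ^ σ κ) * ck ^ totDeg σ) := by
    intro a
    rw [hQrowf 0 a]
    rw [hT0fin]
    refine Finset.sum_congr rfl fun σ _ => ?_
    rw [hbin0 σ, one_mul, zero_add]
  have hQ0below : ∀ a, a < L → Q 0 a = 0 := by
    intro a ha
    rw [hQ0val a]
    refine Finset.sum_eq_zero fun σ _ => ?_
    have hz : P' σ (a - ((totDeg σ : ℝ) * νk - ε * wt σ)) = 0 := by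
      by_contra hnz
      have hcl : ((a - (totDeg σ:ℝ) * νk, totDeg σ) : ℝ × ℕ) ∈ cloud ε P' := by
        refine ⟨σ, rfl, ?_⟩
        have harg : a - (totDeg σ:ℝ) * νk + ε * (wt σ : ℝ)
            = a - ((totDeg σ:ℝ) * νk - ε * wt σ) := by ring
        rw [harg]; exact hnz
      have hge := hPleast.2 ⟨_, hcl, rfl⟩
      simp only at hge
      have : L ≤ a := by push_cast at hge; linarith
      linarith
    rw [hz, zero_mul]
  have hQ0L : Q 0 L = 0 := by
    rw [hQ0val L, ← hPhi, phiAt_eq_sum dd ε P' hfin νk ck]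
    refine Finset.sum_congr rfl fun σ _ => ?_
    have harg : L - ((totDeg σ:ℝ) * νk - ε * wt σ)
        = lineMin ε νk P' - νk * totDeg σ + ε * wt σ := by rw [← hL]; ring
    rw [harg]
  -- α0
  have hα := omega_isLeast (hQom 0) hQ0
  set α0 := sInf (Function.support (Q 0)) with hα0
  have hLα : L < α0 := by
    rcases lt_trichotomy α0 L with h|h|h
    · exact absurd (hQ0below α0 h) hα.1
    · exfalso
      have h1 := hα.1
      rw [Function.mem_support, h] at h1
      exact h1 hQ0L
    · exact h
  -- pT persists in cloud Q
  obtain ⟨ρ0, hdeg0, hne0⟩ := hpTE.1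
  have hρ0S : ρ0 ∈ S := by
    rw [hS, Set.Finite.mem_toFinset]; intro h0; exact hne0 (by rw [h0]; rfl)
  have hQpT : Q ρ0 (pT.1 + ε * wt ρ0) = P' ρ0 (pT.1 + ε * wt ρ0) := by
    rw [hQrowf]
    have h0T : (0 : Fin (n+1) →₀ ℕ) ∈ Tfin S ρ0 := mem_Tfin (by rw [add_zero]; exact hρ0S)
    rw [Finset.sum_eq_single_of_mem 0 h0T ?_]
    · have hb : binomProd ρ0 0 = 1 := by
        rw [binomProd]
        refine Finset.prod_eq_one fun κ _ => ?_
        rw [add_zero, Nat.choose_self, Nat.cast_one]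
      rw [hb, one_mul, totDeg_zero, wt_zero, add_zero]
      push_cast
      simp only [mul_zero, zero_mul, sub_zero, pow_zero, mul_one, Finsupp.coe_zero,
        Pi.zero_apply, Finset.prod_const_one]
    · intro σ _ hσne
      by_contra hterm
      have hRne : P' (ρ0 + σ) (pT.1 + ε * wt ρ0 - ((totDeg σ:ℝ) * νk - ε * wt σ)) ≠ 0 := by
        intro h0
        apply hterm
        rw [h0, zero_mul, mul_zero]
      have hcl : ((pT.1 - (totDeg σ:ℝ) * νk, totDeg (ρ0 + σ)) : ℝ × ℕ) ∈ cloud ε P' := by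
        refine ⟨ρ0 + σ, rfl, ?_⟩
        have harg : pT.1 - (totDeg σ:ℝ) * νk + ε * (wt (ρ0 + σ) : ℝ)
            = pT.1 + ε * wt ρ0 - ((totDeg σ:ℝ) * νk - ε * wt σ) := by
          rw [wt_add]; push_cast; ring
        rw [harg]; exact hRne
      have hElm := hEmem _ hcl ?_
      · have hle := hub _ hElm
        simp only [totDeg_add] at hle
        rw [hdeg0, hpT2] at hle
        exact hσne (totDeg_eq_zero (by omega))
      · simp only
        rw [totDeg_add]
        push_cast
        have h1 : (totDeg ρ0 : ℝ) = (pT.2 : ℝ) := by exact_mod_cast congrArg Nat.cast hdeg0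
        rw [h1]
        linarith [hpTval]
  have hpTQ : pT ∈ cloud ε Q := ⟨ρ0, hdeg0, by rw [hQpT]; exact hne0⟩
  -- positive rows
  set SQ := hQfin.toFinset with hSQ
  have hmemSQ : ∀ {ρ : Fin (n+1) →₀ ℕ}, Q ρ ≠ 0 → ρ ∈ SQ := by
    intro ρ h
    rw [hSQ, Set.Finite.mem_toFinset]; exact h
  have hrow : ∀ ρ : Fin (n+1) →₀ ℕ, Q ρ ≠ 0 →
      IsLeast (Function.support (Q ρ)) (sInf (Function.support (Q ρ))) :=
    fun ρ h => omega_isLeast (hQom ρ) h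
  set SQpos := SQ.filter (fun ρ => 1 ≤ totDeg ρ) with hSQpos
  have hQρ0ne : Q ρ0 ≠ 0 := by
    intro h0
    have := hQpT
    rw [h0] at this
    exact hne0 (by rw [← this]; rfl)
  have hρ0pos : ρ0 ∈ SQpos := by
    rw [hSQpos, Finset.mem_filter]
    exact ⟨hmemSQ hQρ0ne, by rw [hdeg0, hpT2]; exact hT1⟩
  have hSQposQ : ∀ ρ ∈ SQpos, Q ρ ≠ 0 ∧ 1 ≤ totDeg ρ := by
    intro ρ hρ
    rw [hSQpos, Finset.mem_filter] at hρ
    refine ⟨?_, hρ.2⟩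
    have := hρ.1
    rw [hSQ, Set.Finite.mem_toFinset] at this
    exact this
  set βf : (Fin (n+1) →₀ ℕ) → ℝ := fun ρ => sInf (Function.support (Q ρ)) - ε * wt ρ with hβf
  set cand : (Fin (n+1) →₀ ℕ) → ℝ := fun ρ => (α0 - βf ρ) / totDeg ρ with hcand
  have hposne : (SQpos.image cand).Nonempty := ⟨cand ρ0, Finset.mem_image_of_mem _ hρ0pos⟩
  set μ := (SQpos.image cand).max' hposne with hμ
  have hcand_le : ∀ ρ ∈ SQpos, cand ρ ≤ μ :=
    fun ρ hρ => Finset.le_max' _ _ (Finset.mem_image_of_mem _ hρ)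
  -- lower bound over cloud Q
  have hlow : ∀ p ∈ cloud ε Q, α0 ≤ p.1 + μ * p.2 := by
    rintro p ⟨ρ, hdeg, hnep⟩
    by_cases hzero : totDeg ρ = 0
    · have hρz : ρ = 0 := totDeg_eq_zero hzero
      have hp2 : p.2 = 0 := by rw [← hdeg, hzero]
      rw [hρz] at hnep
      rw [wt_zero] at hnep
      push_cast at hnep
      rw [mul_zero, add_zero] at hnep
      have := hα.2 hnep
      rw [hp2]
      push_cast
      linarith
    · have hρpos : ρ ∈ SQpos := by
        rw [hSQpos, Finset.mem_filter]
        refine ⟨hmemSQ ?_, by omega⟩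
        intro h0
        apply hnep
        rw [h0]; rfl
      have hQρne : Q ρ ≠ 0 := (hSQposQ ρ hρpos).1
      have h1 : sInf (Function.support (Q ρ)) ≤ p.1 + ε * wt ρ := (hrow ρ hQρne).2 hnep
      have hβ : βf ρ ≤ p.1 := by rw [hβf]; simp only; linarith
      have h2 := hcand_le ρ hρpos
      rw [hcand] at h2
      simp only at h2
      have htpos : (0:ℝ) < (totDeg ρ : ℝ) := by
        have : 1 ≤ totDeg ρ := by omega
        exact_mod_cast Nat.lt_of_lt_of_le Nat.zero_lt_one this
      rw [div_le_iff₀ htpos] at h2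
      rw [← hdeg]
      linarith
  -- μ > νk
  have hQρ0suppmem : pT.1 + ε * (wt ρ0 : ℝ) ∈ Function.support (Q ρ0) := by
    rw [Function.mem_support, hQpT]; exact hne0
  have hβρ0 : βf ρ0 ≤ pT.1 := by
    have := (hrow ρ0 hQρ0ne).2 hQρ0suppmem
    rw [hβf]; simp only; linarith
  have hTpos : (0:ℝ) < (hT:ℝ) := by exact_mod_cast hT1
  have hμν : νk < μ := by
    have h1 : νk < (α0 - pT.1) / hT := by
      rw [lt_div_iff₀ hTpos]
      have h2 : pT.1 + νk * (pT.2:ℝ) = L := hpTval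
      have h3 : (pT.2 : ℝ) = (hT : ℝ) := by exact_mod_cast congrArg Nat.cast hpT2
      rw [h3] at h2
      linarith
    have h2 : (α0 - pT.1) / (hT:ℝ) ≤ cand ρ0 := by
      rw [hcand]
      simp only
      have h3 : (totDeg ρ0 : ℝ) = (hT : ℝ) := by
        rw [hdeg0]; exact_mod_cast congrArg Nat.cast hpT2
      rw [h3]
      gcongr
    linarith [hcand_le ρ0 hρ0pos]
  -- the attaining row
  obtain ⟨ρs, hρsPos, hρsμ⟩ := Finset.mem_image.1 ((SQpos.image cand).max'_mem hposne)
  rw [← hμ] at hρsμ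
  obtain ⟨hρsQ, hρsdeg⟩ := hSQposQ ρs hρsPos
  have hrows := hrow ρs hρsQ
  set ms := sInf (Function.support (Q ρs)) with hms
  have htspos : (0:ℝ) < (totDeg ρs : ℝ) := by
    exact_mod_cast Nat.lt_of_lt_of_le Nat.zero_lt_one hρsdeg
  have hqcl : ((ms - ε * wt ρs, totDeg ρs) : ℝ × ℕ) ∈ cloud ε Q := by
    refine ⟨ρs, rfl, ?_⟩
    have harg : ms - ε * (wt ρs:ℝ) + ε * (wt ρs:ℝ) = ms := by ring
    rw [harg]
    exact hrows.1
  have hqval : (ms - ε * (wt ρs:ℝ)) + μ * (totDeg ρs:ℝ) = α0 := by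
    have hmul : μ * (totDeg ρs:ℝ) = α0 - βf ρs := by
      rw [← hρsμ, hcand]
      simp only
      rw [div_mul_cancel₀ _ (ne_of_gt htspos)]
    rw [hβf] at hmul
    simp only at hmul
    rw [← hms] at hmul
    linarith
  have hp0cl : ((α0, 0) : ℝ × ℕ) ∈ cloud ε Q := by
    refine ⟨0, totDeg_zero, ?_⟩
    rw [wt_zero]
    push_cast
    rw [mul_zero, add_zero]
    exact hα.1
  have hQIs : IsLeast ((fun p : ℝ × ℕ => p.1 + μ * p.2) '' cloud ε Q) α0 := by
    constructor
    · exact ⟨(α0, 0), hp0cl, by push_cast; ring⟩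
    · rintro x ⟨p, hp, rfl⟩
      exact hlow p hp
  have hQlm : lineMin ε μ Q = α0 := by rw [lineMin]; exact hQIs.csInf_eq
  refine ⟨μ, hμν, (α0, 0), (ms - ε * wt ρs, totDeg ρs),
    ⟨hp0cl, by rw [hQlm]; push_cast; ring⟩,
    ⟨hqcl, by rw [hQlm]; exact hqval⟩, ?_⟩
  intro hcon
  have h2 := congrArg Prod.snd hcon
  simp only at h2
  omega

end SecC

end
/-- an admissible generalized polynomial is either a solution,
or the Newton polygon of `Q = P[r(x)]` has a side of co-slope `> max supp r`. -/
theorem stmt16 (dd : ℝ → ℂ) (ε : ℝ) (hop : IsAdmissibleOp dd ε)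
    (n : ℕ) (P : PolyG n)
    (hPfin : (Function.support P).Finite) (hPcoef : ∀ ρ, OmegaSupp (P ρ))
    (hP : P ≠ 0) (k : ℕ) (c : ℕ → ℂ) (ν : ℕ → ℝ)
    (hν : ∀ i < k, ν i < ν (i+1)) (hc : ∀ i ≤ k, c i ≠ 0)
    (hadm : AdmissibleUpTo dd ε P c ν k)
    (Q : PolyG n) (hQ : Q = seqSub dd ε P c ν (k+1)) :
    evalP P (fun κ : Fin (n+1) => (Dop dd ε)^[(κ : ℕ)] (rSer c ν k)) = 0 ∨
      ∃ μ : ℝ, ν k < μ ∧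
        ∃ p q : ℝ × ℕ, p ∈ Eelem ε μ Q ∧ q ∈ Eelem ε μ Q ∧ p ≠ q := by
  have hfin' := seqSub_fin dd ε P hPfin c ν k
  have hom' := seqSub_omega dd ε P hPfin hPcoef c ν k
  have hQdef : Q = fullSub (seqSub dd ε P c ν k) (fun κ => phiF (Mvec dd ε (c k) (ν k) κ)) := by
    rw [hQ]
    show subMon dd ε (seqSub dd ε P c ν k) (c k) (ν k) = _
    exact subMon_eq dd ε _ (c k) (ν k)
  have hQ0eval : Q 0 = evalP P (fun κ : Fin (n+1) => (Dop dd ε)^[(κ:ℕ)] (rSer c ν k)) := by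
    rw [hQ]; exact Q0_eval dd ε P hPfin c ν k
  by_cases h0 : Q 0 = 0
  · left
    rw [← hQ0eval]
    exact h0
  · right
    have hne' : seqSub dd ε P c ν k ≠ 0 := by
      intro hz
      apply h0
      rw [hQdef, hz]
      funext a
      show fullSub 0 _ 0 a = 0
      rw [fullSub]
      have hzz : ∀ σ : Fin (n+1) →₀ ℕ,
          binomProd 0 σ * mulG ((0 : PolyG n) (0 + σ))
            (prodPow (fun κ => phiF (Mvec dd ε (c k) (ν k) κ)) σ) a = 0 := by
        intro σ
        rw [show ((0 : PolyG n) (0 + σ)) = 0 from rfl, mulG_zero_left]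
        simp
      rw [finsum_congr hzz, finsum_zero]
    obtain ⟨μ, hμ, p, q, hp, hq, hpq⟩ := polygon_main dd ε (seqSub dd ε P c ν k) hfin' hom' hne'
      (c k) (ν k) (hadm k (le_refl k)) Q hQdef h0
    exact ⟨μ, hμ, p, q, hp, hq, hpq⟩
end
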